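/- arXiv:2506.00059 — 5 statements merged into one kernel-verified Lean document; each statement's English description precedes it below -/
import Mathlib

section
/- Fix M > 0 and 0 < T₀ ≤ T. For every ε > 0 there exists δ > 0 such that for every n ∈ ℕ⁺, every choice of SIS parameters p = (W, z(0), γ, π) with W symmetric with entries in [0,M], z(0) ∈ [0,1]ⁿ, γ with entries in [0,M], π nonnegative with Σ_i π_i = 1, and every symmetric matrix Ŵ with entries in [0,M]: if H_{2,T₀} < δ then H_{2,T} < ε. (δ depends only on ε, M, T₀, T, not on n or p.) -/
/-!
Along an SIS trajectory the discrepancy `f t = Σᵢ ((A z t)ᵢ - (Â z t)ᵢ)² πᵢ` obeys Cauchy-type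
estimates `|f⁽ᵏ⁾ t| ≤ M² k! (6M)ᵏ` for `t > 0`, uniformly in `n` and in the parameters: the
equation expresses `z⁽ᵏ⁺¹⁾` through lower derivatives, and since the rows of `Wπ` have `ℓ¹`-norm
at most `M`, Leibniz' rule gives `|zᵢ⁽ᵏ⁾| ≤ k! (3M)ᵏ` by induction.

Such estimates make smallness propagate. If `∫₀^T₀ f` is small then, as `f ≥ 0` and `f'` is
bounded, `f` is small on `[T₀/2, T₀]`. Interpolating between `f⁽ᴷ⁾` and `f⁽ᴷ⁺²⁾` makes every
derivative up to a fixed order `N` small there too, and Taylor's formula of order `N` at the right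
end of the window then bounds `f` a distance `1/(12M)` further on, the remainder being at most
`M² 2⁻⁽ᴺ⁺¹⁾`. Finitely many such steps cover `[T₀, T]`; the number of steps and all tolerances
depend only on `ε`, `M`, `T₀` and `T`.
-/

open Set Finset
open scoped Nat ContDiff

section Calculus

variable {f : ℝ → ℝ} {U : Set ℝ}

theorem iteratedDeriv_iteratedDeriv (j k : ℕ) :
    iteratedDeriv j (iteratedDeriv k f) = iteratedDeriv (j + k) f := by
  induction j with
  | zero => simp
  | succ j ih => rw [iteratedDeriv_succ, ih, ← iteratedDeriv_succ, Nat.add_right_comm]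

theorem ContDiffOn.iteratedDeriv_of_isOpen (hf : ContDiffOn ℝ ∞ f U) (hU : IsOpen U) (k : ℕ) :
    ContDiffOn ℝ ∞ (iteratedDeriv k f) U := by
  induction k with
  | zero => simpa
  | succ k ih =>
    rw [iteratedDeriv_succ]
    exact ((contDiffOn_infty_iff_deriv_of_isOpen hU).1 ih).2

theorem ContDiffOn.exists_taylor_lagrange (hf : ContDiffOn ℝ ∞ f U) (hU : IsOpen U) {b x : ℝ}
    (hbx : b < x) (hsub : Icc b x ⊆ U) (N : ℕ) :
    ∃ ξ ∈ Ioo b x, f x - ∑ k ∈ range (N + 1), iteratedDeriv k f b * (x - b) ^ k / k ! =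
      iteratedDeriv (N + 1) f ξ * (x - b) ^ (N + 1) / (N + 1)! := by
  have hsub' : uIcc b x ⊆ U := by rwa [uIcc_of_le hbx.le]
  obtain ⟨ξ, hξ, h⟩ := taylor_mean_remainder_lagrange_iteratedDeriv hbx.ne
    ((hf.mono hsub').of_le (by exact_mod_cast le_top))
  rw [uIoo_of_le hbx.le] at hξ
  refine ⟨ξ, hξ, ?_⟩
  rw [← h, taylor_within_apply]
  congr 1
  refine sum_congr rfl fun k _ => ?_
  rw [iteratedDerivWithin_eq_iteratedDeriv (uniqueDiffOn_uIcc hbx.ne)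
    ((hf.contDiffAt (hU.mem_nhds (hsub ⟨le_rfl, hbx.le⟩))).of_le (by exact_mod_cast le_top))
    left_mem_uIcc, smul_eq_mul]
  field_simp

theorem ContDiffOn.abs_sub_taylor_le (hf : ContDiffOn ℝ ∞ f U) (hU : IsOpen U) {b x : ℝ}
    (hbx : b ≤ x) (hsub : Icc b x ⊆ U) (N : ℕ) {D : ℝ}
    (hD : ∀ ξ ∈ Ioo b x, |iteratedDeriv (N + 1) f ξ| ≤ D) :
    |f x - ∑ k ∈ range (N + 1), iteratedDeriv k f b * (x - b) ^ k / k !| ≤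
      D * (x - b) ^ (N + 1) / (N + 1)! := by
  rcases hbx.eq_or_lt with rfl | hbx
  · simp [sum_range_succ']
  obtain ⟨ξ, hξ, h⟩ := hf.exists_taylor_lagrange hU hbx hsub N
  rw [h, abs_div, abs_mul, abs_of_nonneg (pow_nonneg (sub_nonneg.2 hbx.le) _), Nat.abs_cast]
  gcongr
  exact hD ξ hξ

end Calculus

structure CauchyBounds (C R : ℝ) (f : ℝ → ℝ) : Prop where
  contDiffOn : ContDiffOn ℝ ∞ f (Ioi 0)
  abs_iteratedDeriv_le : ∀ (k : ℕ), ∀ t > 0, |iteratedDeriv k f t| ≤ C * k ! * R ^ k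

section Propagation

variable {C R ℓ : ℝ}

theorem CauchyBounds.abs_sub_taylor_le {f : ℝ → ℝ} (hf : CauchyBounds C R f) {b t : ℝ}
    (hb : 0 < b) (hbt : b ≤ t) (N : ℕ) :
    |f t - ∑ k ∈ range (N + 1), iteratedDeriv k f b * (t - b) ^ k / k !| ≤
      C * (R * (t - b)) ^ (N + 1) := by
  calc _ ≤ C * (N + 1)! * R ^ (N + 1) * (t - b) ^ (N + 1) / (N + 1)! :=
        hf.contDiffOn.abs_sub_taylor_le isOpen_Ioi hbt (fun u hu => hb.trans_le hu.1) N
          fun ξ hξ => hf.abs_iteratedDeriv_le (N + 1) ξ (hb.trans hξ.1)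
    _ = C * (R * (t - b)) ^ (N + 1) := by rw [mul_pow]; field_simp

theorem abs_iteratedDeriv_succ_le_of_window {f : ℝ → ℝ} (hf : ContDiffOn ℝ ∞ f (Ioi 0)) (K : ℕ)
    {a h β D : ℝ} (ha : 0 < a) (hh : 0 < h) (hhℓ : h ≤ ℓ)
    (hβ : ∀ t ∈ Icc a (a + ℓ), |iteratedDeriv K f t| ≤ β)
    (hD : ∀ t ∈ Icc a (a + ℓ), |iteratedDeriv (K + 2) f t| ≤ D) :
    ∀ t ∈ Icc a (a + ℓ), |iteratedDeriv (K + 1) f t| ≤ 2 * β / h + 3 * D * h / 2 := by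
  intro t ht
  obtain ⟨p, hap, hpt, htp, hph⟩ : ∃ p, a ≤ p ∧ p ≤ t ∧ t ≤ p + h ∧ p + h ≤ a + ℓ := by
    rcases le_total t (a + ℓ - h) with hth | hth
    · exact ⟨t, ht.1, le_rfl, by linarith, by linarith⟩
    · exact ⟨a + ℓ - h, by linarith, hth, by linarith [ht.2], by linarith⟩
  have hpos : ∀ {u v}, a ≤ u → Icc u v ⊆ Ioi 0 := fun hu _ hw => ha.trans_le (hu.trans hw.1)
  have hwin : ∀ {u v}, a ≤ u → v ≤ a + ℓ → ∀ w ∈ Ioo u v, w ∈ Icc a (a + ℓ) :=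
    fun hu hv _ hw => ⟨hu.trans hw.1.le, hw.2.le.trans hv⟩
  set g := iteratedDeriv K f
  have hg : ContDiffOn ℝ ∞ g (Ioi 0) := hf.iteratedDeriv_of_isOpen isOpen_Ioi K
  have htaylor : |g (p + h) - (g p + iteratedDeriv (K + 1) f p * h)| ≤ D * h ^ 2 / 2 := by
    have := hg.abs_sub_taylor_le isOpen_Ioi (x := p + h) (by linarith) (hpos hap) 1 (D := D)
      fun ξ hξ => by
        rw [iteratedDeriv_iteratedDeriv, show 1 + 1 + K = K + 2 by ring]
        exact hD ξ (hwin hap hph ξ hξ)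
    simp only [sum_range_succ, sum_range_zero, zero_add, add_sub_cancel_left] at this
    norm_num at this
    rwa [iteratedDeriv_succ]
  have hmv : |iteratedDeriv (K + 1) f t - iteratedDeriv (K + 1) f p| ≤ D * (t - p) := by
    have := (hf.iteratedDeriv_of_isOpen isOpen_Ioi (K + 1)).abs_sub_taylor_le isOpen_Ioi hpt
      (hpos hap) 0 (D := D) fun ξ hξ => by
        rw [iteratedDeriv_iteratedDeriv, show 0 + 1 + (K + 1) = K + 2 by ring]
        exact hD ξ (hwin hap ht.2 ξ hξ)
    simpa using this
  have hslope : |iteratedDeriv (K + 1) f p| * h ≤ 2 * β + D * h ^ 2 / 2 := by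
    have h1 := hβ (p + h) ⟨by linarith, hph⟩
    have h2 := hβ p ⟨hap, by linarith⟩
    rw [show |iteratedDeriv (K + 1) f p| * h = |iteratedDeriv (K + 1) f p * h| by
      rw [abs_mul, abs_of_pos hh]]
    rw [abs_le] at htaylor h1 h2 ⊢
    constructor <;> linarith
  have hp : |iteratedDeriv (K + 1) f p| ≤ 2 * β / h + D * h / 2 := by
    rw [show 2 * β / h + D * h / 2 = (2 * β + D * h ^ 2 / 2) / h by field_simp, le_div_iff₀ hh]
    exact hslope
  have hD0 : 0 ≤ D := (abs_nonneg _).trans (hD t ht)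
  have := abs_sub_abs_le_abs_sub (iteratedDeriv (K + 1) f t) (iteratedDeriv (K + 1) f p)
  nlinarith

theorem exists_window_iteratedDeriv_small (hC : 0 < C) (hR : 0 < R) (hℓ : 0 < ℓ) (K : ℕ) :
    ∀ ε > 0, ∃ η > 0, ∀ f, CauchyBounds C R f → ∀ a > 0, (∀ t ∈ Icc a (a + ℓ), |f t| ≤ η) →
      ∀ j ≤ K, ∀ t ∈ Icc a (a + ℓ), |iteratedDeriv j f t| ≤ ε := by
  induction K with
  | zero =>
    intro ε hε
    refine ⟨ε, hε, fun f _ a _ hsmall j hj t ht => ?_⟩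
    rw [Nat.le_zero.1 hj, iteratedDeriv_zero]
    exact hsmall t ht
  | succ K ih =>
    intro ε hε
    set D := C * (K + 2)! * R ^ (K + 2)
    have hD : 0 < D := by positivity
    set h := min ℓ (ε / (3 * D))
    have hh : 0 < h := lt_min hℓ (by positivity)
    obtain ⟨η, hη, hsmall⟩ := ih (min ε (ε * h / 4)) (by positivity)
    refine ⟨η, hη, fun f hf a ha hη j hj t ht => ?_⟩
    rcases Nat.le_succ_iff.1 hj with hj | rfl
    · exact (hsmall f hf a ha hη j hj t ht).trans (min_le_left _ _)
    have hinterp := abs_iteratedDeriv_succ_le_of_window hf.contDiffOn K ha hh (min_le_left _ _)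
      (fun u hu => (hsmall f hf a ha hη K le_rfl u hu).trans (min_le_right _ _))
      (fun u hu => hf.abs_iteratedDeriv_le (K + 2) u (ha.trans_le hu.1)) t ht
    have hDh : D * h ≤ ε / 3 := by
      calc D * h ≤ D * (ε / (3 * D)) := by gcongr; exact min_le_right _ _
        _ = ε / 3 := by field_simp
    have : 2 * (ε * h / 4) / h = ε / 2 := by field_simp; ring
    linarith

theorem exists_small_of_window_small (hC : 0 < C) (hR : 0 < R) (hℓ : 0 < ℓ) :
    ∀ ε > 0, ∃ η > 0, ∀ f, CauchyBounds C R f → ∀ a > 0, (∀ t ∈ Icc a (a + ℓ), |f t| ≤ η) →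
      ∀ t ∈ Icc a (a + ℓ + (2 * R)⁻¹), |f t| ≤ ε := by
  intro ε hε
  obtain ⟨N, hN⟩ := exists_pow_lt_of_lt_one (show 0 < ε / (2 * C) by positivity)
    (show (1 / 2 : ℝ) < 1 by norm_num)
  set ε' := ε / (2 * Real.exp (2 * R)⁻¹)
  obtain ⟨η, hη, hderiv⟩ :=
    exists_window_iteratedDeriv_small hC hR hℓ N ε' (by positivity)
  refine ⟨min η ε, by positivity, fun f hf a ha hsmall t ht => ?_⟩
  rcases le_or_gt t (a + ℓ) with hta | hta
  · exact (hsmall t ⟨ht.1, hta⟩).trans (min_le_right _ _)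
  set b := a + ℓ
  have hb : 0 < b := by positivity
  have htb : 0 ≤ t - b := by linarith
  have hderiv_b : ∀ k ≤ N, |iteratedDeriv k f b| ≤ ε' := fun k hk =>
    hderiv f hf a ha (fun u hu => (hsmall u hu).trans (min_le_left _ _)) k hk b
      ⟨by linarith, le_rfl⟩
  have hR_half : R * (t - b) ≤ 1 / 2 := by
    have := ht.2
    calc R * (t - b) ≤ R * (2 * R)⁻¹ := by gcongr; linarith
      _ = 1 / 2 := by field_simp
  have hremainder : |f t - ∑ k ∈ range (N + 1), iteratedDeriv k f b * (t - b) ^ k / k !| ≤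
      ε / 2 := by
    calc _ ≤ C * (R * (t - b)) ^ (N + 1) := hf.abs_sub_taylor_le hb hta.le N
      _ ≤ C * (1 / 2) ^ N := by
        gcongr
        calc (R * (t - b)) ^ (N + 1) ≤ (1 / 2) ^ (N + 1) := by gcongr
          _ ≤ (1 / 2) ^ N := pow_le_pow_of_le_one (by norm_num) (by norm_num) N.le_succ
      _ ≤ ε / 2 := by
        have hCε : C * (ε / (2 * C)) = ε / 2 := by field_simp
        linarith [mul_lt_mul_of_pos_left hN hC]
  have hpoly_le : |∑ k ∈ range (N + 1), iteratedDeriv k f b * (t - b) ^ k / k !| ≤ ε / 2 := by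
    calc |∑ k ∈ range (N + 1), iteratedDeriv k f b * (t - b) ^ k / k !|
        ≤ ∑ k ∈ range (N + 1), ε' * ((t - b) ^ k / k !) := by
          refine (abs_sum_le_sum_abs _ _).trans (sum_le_sum fun k hk => ?_)
          rw [abs_div, abs_mul, abs_of_nonneg (pow_nonneg htb k), Nat.abs_cast, mul_div_assoc]
          gcongr
          exact hderiv_b k (Nat.lt_succ_iff.1 (mem_range.1 hk))
      _ ≤ ε' * Real.exp (2 * R)⁻¹ := by
          rw [← mul_sum]
          gcongr
          exact (Real.sum_le_exp_of_nonneg htb _).trans (Real.exp_le_exp.2 (by linarith [ht.2]))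
      _ = ε / 2 := by simp only [ε']; field_simp
  have := abs_sub_abs_le_abs_sub (f t)
    (∑ k ∈ range (N + 1), iteratedDeriv k f b * (t - b) ^ k / k !)
  linarith

theorem exists_small_of_window_small_iterate (hC : 0 < C) (hR : 0 < R) (hℓ : 0 < ℓ) (m : ℕ) :
    ∀ ε > 0, ∃ η > 0, ∀ f, CauchyBounds C R f → ∀ a > 0, (∀ t ∈ Icc a (a + ℓ), |f t| ≤ η) →
      ∀ t ∈ Icc a (a + ℓ + m * (2 * R)⁻¹), |f t| ≤ ε := by
  induction m with
  | zero =>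
    intro ε hε
    exact ⟨ε, hε, fun f _ a _ hsmall t ht => hsmall t (by simpa using ht)⟩
  | succ m ih =>
    intro ε hε
    obtain ⟨η', hη', hfar⟩ := ih ε hε
    obtain ⟨η, hη, hnear⟩ := exists_small_of_window_small hC hR hℓ (min η' ε) (by positivity)
    refine ⟨η, hη, fun f hf a ha hsmall t ht => ?_⟩
    have hnear' := hnear f hf a ha hsmall
    have hs : 0 < (2 * R)⁻¹ := by positivity
    rcases le_or_gt t (a + ℓ + (2 * R)⁻¹) with hta | hta
    · exact (hnear' t ⟨ht.1, hta⟩).trans (min_le_right _ _)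
    refine hfar f hf (a + (2 * R)⁻¹) (by positivity)
      (fun u hu => (hnear' u ⟨by linarith [hu.1], by linarith [hu.2]⟩).trans (min_le_left _ _))
      t ⟨by linarith, ?_⟩
    have := ht.2
    push_cast at this
    linarith

end Propagation

theorem exists_forall_le_of_integral_lt {L ℓ T₀ : ℝ} (hL : 0 < L) (hℓ : 0 < ℓ) :
    ∀ η > 0, ∃ δ > 0, ∀ f : ℝ → ℝ, ContinuousOn f (Icc 0 T₀) → (∀ t ∈ Icc 0 T₀, 0 ≤ f t) →
      (∀ s t, 0 ≤ s → s ≤ t → t ≤ T₀ → f t - f s ≤ L * (t - s)) →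
      ∫ t in 0..T₀, f t < δ → ∀ t ∈ Icc ℓ T₀, f t ≤ η := by
  intro η hη
  set w := min ℓ (η / (2 * L))
  have hw : 0 < w := lt_min hℓ (by positivity)
  refine ⟨w * η / 2, by positivity, fun f hcont hnn hlip hint t ht => ?_⟩
  by_contra! hft
  have hwt : 0 ≤ t - w := by linarith [ht.1, min_le_left ℓ (η / (2 * L))]
  have hT₀ : 0 ≤ T₀ := by linarith [ht.2]
  have hlower : ∀ u ∈ Icc (t - w) t, η / 2 ≤ f u := by
    intro u hu
    have h1 := hlip u t (hwt.trans hu.1) hu.2 ht.2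
    have h2 : L * (t - u) ≤ η / 2 := by
      calc L * (t - u) ≤ L * (η / (2 * L)) := by
            gcongr; linarith [hu.1, min_le_right ℓ (η / (2 * L))]
        _ = η / 2 := by field_simp
    linarith
  have hfint : IntervalIntegrable f MeasureTheory.volume 0 T₀ := hcont.intervalIntegrable_of_Icc hT₀
  have hpiece : w * η / 2 ≤ ∫ u in (t - w)..t, f u := by
    have hsub : uIcc (t - w) t ⊆ uIcc 0 T₀ := by
      rw [Set.uIcc_of_le hT₀, Set.uIcc_of_le (by linarith)]
      exact Icc_subset_Icc hwt ht.2
    simpa using intervalIntegral.integral_mono_on (by linarith) intervalIntegrable_const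
      (hfint.mono_set hsub) hlower
  have hmono : ∫ u in (t - w)..t, f u ≤ ∫ u in 0..T₀, f u :=
    intervalIntegral.integral_mono_interval hwt (by linarith) ht.2
      (MeasureTheory.ae_restrict_of_forall_mem measurableSet_Ioc
        fun u hu => hnn u (Ioc_subset_Icc_self hu)) hfint
  linarith

theorem CauchyBounds.sub_le_mul_sub {C R : ℝ} {f : ℝ → ℝ} (hf : CauchyBounds C R f)
    (hcont : ContinuousOn f (Ici 0)) {s t : ℝ} (hs : 0 ≤ s) (hst : s ≤ t) :
    f t - f s ≤ C * R * (t - s) := by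
  refine (convex_Ici 0).image_sub_le_mul_sub_of_deriv_le hcont ?_ (fun x hx => ?_) s hs t
    (hs.trans hst) hst
  · rw [interior_Ici]
    exact hf.contDiffOn.differentiableOn (by simp)
  · rw [interior_Ici] at hx
    have := hf.abs_iteratedDeriv_le 1 x hx
    rw [iteratedDeriv_one] at this
    simpa using (le_abs_self _).trans this

theorem exists_integral_lt_of_integral_lt {C R T₀ T : ℝ} (hC : 0 < C) (hR : 0 < R)
    (hT₀ : 0 < T₀) (hTT : T₀ ≤ T) :
    ∀ ε > 0, ∃ δ > 0, ∀ f, CauchyBounds C R f → ContinuousOn f (Ici 0) →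
      (∀ t ≥ 0, 0 ≤ f t) → ∫ t in 0..T₀, f t < δ → ∫ t in 0..T, f t < ε := by
  intro ε hε
  set ε' := ε / (2 * (T - T₀ + 1))
  have hε' : 0 < ε' := div_pos hε (by linarith)
  set m := ⌈(T - T₀) * (2 * R)⌉₊
  obtain ⟨η, hη, hpropagate⟩ :=
    exists_small_of_window_small_iterate hC hR (half_pos hT₀) m ε' hε'
  obtain ⟨δ, hδ, hinitial⟩ := exists_forall_le_of_integral_lt (T₀ := T₀) (mul_pos hC hR)
    (half_pos hT₀) η hη
  refine ⟨min δ (ε / 2), by positivity, fun f hf hcont hnn hint => ?_⟩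
  have hwindow : ∀ t ∈ Icc (T₀ / 2) (T₀ / 2 + T₀ / 2), |f t| ≤ η := by
    intro t ht
    rw [abs_of_nonneg (hnn t (by linarith [ht.1]))]
    exact hinitial f (hcont.mono Icc_subset_Ici_self) (fun u hu => hnn u hu.1)
      (fun s u hs hsu _ => hf.sub_le_mul_sub hcont hs hsu)
      (hint.trans_le (min_le_left _ _)) t ⟨ht.1, by linarith [ht.2]⟩
  have hm : T - T₀ ≤ m * (2 * R)⁻¹ := by
    rw [← div_eq_mul_inv, le_div_iff₀ (by positivity)]
    exact Nat.le_ceil _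
  have htail : ∀ t ∈ Icc T₀ T, f t ≤ ε' := fun t ht =>
    (le_abs_self _).trans (hpropagate f hf (T₀ / 2) (half_pos hT₀) hwindow t
      ⟨by linarith [ht.1], by linarith [ht.2]⟩)
  have hint₁ : IntervalIntegrable f MeasureTheory.volume 0 T₀ :=
    (hcont.mono Icc_subset_Ici_self).intervalIntegrable_of_Icc hT₀.le
  have hint₂ : IntervalIntegrable f MeasureTheory.volume T₀ T :=
    (hcont.mono fun u hu => hT₀.le.trans hu.1).intervalIntegrable_of_Icc hTT
  have htail_int : ∫ t in T₀..T, f t ≤ ε' * (T - T₀) := by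
    have := intervalIntegral.integral_mono_on hTT hint₂ intervalIntegrable_const htail
    simpa [mul_comm] using this
  have hε'T : ε' * (T - T₀) < ε / 2 := by
    rw [div_mul_eq_mul_div, div_lt_div_iff₀ (by linarith) two_pos]
    nlinarith
  rw [← intervalIntegral.integral_add_adjacent_intervals hint₁ hint₂]
  linarith [min_le_right δ (ε / 2)]

section Leibniz

variable {f g : ℝ → ℝ} {x : ℝ} {k : ℕ}

theorem abs_iteratedDeriv_mul_le (hf : ContDiffAt ℝ k f x) (hg : ContDiffAt ℝ k g x)
    {A B ρ : ℝ} (hρ : 0 ≤ ρ) (hfb : ∀ m ≤ k, |iteratedDeriv m f x| ≤ A * m ! * ρ ^ m)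
    (hgb : ∀ m ≤ k, |iteratedDeriv m g x| ≤ B * m ! * ρ ^ m) :
    |iteratedDeriv k (fun y => f y * g y) x| ≤ A * B * (k + 1)! * ρ ^ k := by
  have hA : 0 ≤ A := by simpa using (abs_nonneg _).trans (hfb 0 k.zero_le)
  have hB : 0 ≤ B := by simpa using (abs_nonneg _).trans (hgb 0 k.zero_le)
  rw [iteratedDeriv_fun_mul hf hg]
  calc |∑ m ∈ range (k + 1), (k.choose m : ℝ) * iteratedDeriv m f x * iteratedDeriv (k - m) g x|
      ≤ ∑ m ∈ range (k + 1), A * B * k ! * ρ ^ k := by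
        refine (abs_sum_le_sum_abs _ _).trans (sum_le_sum fun m hm => ?_)
        have hmk : m ≤ k := Nat.lt_succ_iff.1 (mem_range.1 hm)
        rw [abs_mul, abs_mul, Nat.abs_cast]
        calc (k.choose m : ℝ) * |iteratedDeriv m f x| * |iteratedDeriv (k - m) g x|
            ≤ k.choose m * (A * m ! * ρ ^ m) * (B * (k - m)! * ρ ^ (k - m)) := by
              gcongr
              exacts [hfb m hmk, hgb (k - m) (Nat.sub_le k m)]
          _ = A * B * (k.choose m * m ! * (k - m)!) * (ρ ^ m * ρ ^ (k - m)) := by ring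
          _ = A * B * k ! * ρ ^ k := by
              rw [← pow_add, Nat.add_sub_cancel' hmk]
              exact_mod_cast congrArg (A * B * · * ρ ^ k)
                (congrArg (Nat.cast (R := ℝ)) (Nat.choose_mul_factorial_mul_factorial hmk))
    _ = A * B * (k + 1)! * ρ ^ k := by
        rw [sum_const, card_range, nsmul_eq_mul, Nat.factorial_succ]
        push_cast
        ring

theorem abs_iteratedDeriv_sum_mul_le {ι : Type*} [Fintype ι] (c : ι → ℝ) {u : ι → ℝ → ℝ}
    (hu : ∀ j, ContDiffAt ℝ k (u j) x) {B : ℝ} (hB : ∀ j, |iteratedDeriv k (u j) x| ≤ B) :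
    |iteratedDeriv k (fun y => ∑ j, c j * u j y) x| ≤ (∑ j, |c j|) * B := by
  rw [iteratedDeriv_fun_sum fun j _ => contDiffAt_const.mul (hu j), sum_mul]
  refine (abs_sum_le_sum_abs _ _).trans (sum_le_sum fun j _ => ?_)
  rw [iteratedDeriv_const_mul_field, abs_mul]
  exact mul_le_mul_of_nonneg_left (hB j) (abs_nonneg _)

end Leibniz

section SIS

variable {ι : Type*} [Fintype ι] {a : ι → ι → ℝ} {γ : ι → ℝ} {z : ℝ → ι → ℝ}

theorem hasDerivAt_sis
    (hode : ∀ i, ∀ t ∈ Ici (0 : ℝ), HasDerivWithinAt (fun s => z s i)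
      ((1 - z t i) * (∑ j, a i j * z t j) - γ i * z t i) (Ici 0) t)
    {t : ℝ} (ht : 0 < t) (i : ι) :
    HasDerivAt (fun s => z s i) ((1 - z t i) * (∑ j, a i j * z t j) - γ i * z t i) t :=
  (hode i t (mem_Ici.2 ht.le)).hasDerivAt (Ici_mem_nhds ht)

theorem contDiffOn_sis
    (hode : ∀ i, ∀ t ∈ Ici (0 : ℝ), HasDerivWithinAt (fun s => z s i)
      ((1 - z t i) * (∑ j, a i j * z t j) - γ i * z t i) (Ici 0) t) (i : ι) :
    ContDiffOn ℝ ∞ (fun t => z t i) (Ioi 0) := by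
  refine contDiffOn_infty.2 fun n => ?_
  induction n generalizing i with
  | zero =>
    exact contDiffOn_zero.2 fun t ht =>
      (hasDerivAt_sis hode ht i).continuousAt.continuousWithinAt
  | succ n ih =>
    rw [Nat.cast_succ, contDiffOn_succ_iff_deriv_of_isOpen isOpen_Ioi]
    refine ⟨fun t ht => (hasDerivAt_sis hode ht i).differentiableAt.differentiableWithinAt,
      by simp, ?_⟩
    refine ContDiffOn.congr ?_ fun t ht => (hasDerivAt_sis hode ht i).deriv
    exact ((contDiffOn_const.sub (ih i)).mul
      (ContDiffOn.sum fun j _ => contDiffOn_const.mul (ih j))).sub (contDiffOn_const.mul (ih i))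

theorem abs_iteratedDeriv_sis_le {M : ℝ} (ha : ∀ i, ∑ j, |a i j| ≤ M) (hγ : ∀ i, |γ i| ≤ M)
    (hode : ∀ i, ∀ t ∈ Ici (0 : ℝ), HasDerivWithinAt (fun s => z s i)
      ((1 - z t i) * (∑ j, a i j * z t j) - γ i * z t i) (Ici 0) t)
    (hz : ∀ t > 0, ∀ i, |z t i| ≤ 1) (k : ℕ) :
    ∀ i, ∀ t > 0, |iteratedDeriv k (fun s => z s i) t| ≤ k ! * (3 * M) ^ k := by
  have hat : ∀ {m : ℕ} j {t : ℝ}, 0 < t → ContDiffAt ℝ m (fun s => z s j) t := fun j t ht =>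
    ((contDiffOn_sis hode j).contDiffAt (Ioi_mem_nhds ht)).of_le (by exact_mod_cast le_top)
  induction k using Nat.strong_induction_on with
  | _ k ih =>
  intro i t ht
  rcases k with _ | K
  · simpa using hz t ht i
  have hM : 0 ≤ M := (abs_nonneg _).trans (hγ i)
  set S : ℝ → ℝ := fun s => ∑ j, a i j * z s j
  have hSat : ContDiffAt ℝ K S t := ContDiffAt.sum fun j _ => contDiffAt_const.mul (hat j ht)
  have hzb : ∀ m ≤ K, |iteratedDeriv m (fun s => z s i) t| ≤ 1 * m ! * (3 * M) ^ m :=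
    fun m hm => by rw [one_mul]; exact ih m (by omega) i t ht
  have hSb : ∀ m ≤ K, |iteratedDeriv m S t| ≤ M * m ! * (3 * M) ^ m := fun m hm =>
    (abs_iteratedDeriv_sum_mul_le (a i) (fun j => hat j ht)
      (fun j => ih m (by omega) j t ht)).trans (by rw [mul_assoc]; gcongr; exact ha i)
  have hderiv : EqOn (deriv fun s => z s i) (fun s => S s - z s i * S s - γ i * z s i)
      (Ioi 0) := fun s hs => by rw [(hasDerivAt_sis hode hs i).deriv]; ring
  rw [iteratedDeriv_succ', hderiv.iteratedDeriv_of_isOpen isOpen_Ioi K ht,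
    iteratedDeriv_fun_sub (hSat.sub ((hat i ht).mul hSat)) (contDiffAt_const.mul (hat i ht)),
    iteratedDeriv_fun_sub hSat ((hat i ht).mul hSat), iteratedDeriv_const_mul_field]
  have hzS := abs_iteratedDeriv_mul_le (hat i ht) hSat (by positivity) hzb hSb
  have hγz : |γ i * iteratedDeriv K (fun s => z s i) t| ≤ M * (K ! * (3 * M) ^ K) := by
    rw [abs_mul]
    exact mul_le_mul (hγ i) (ih K (by omega) i t ht) (abs_nonneg _) hM
  have hP : 0 ≤ (K ! : ℝ) * (3 * M) ^ K := by positivity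
  have hsum : M * K ! * (3 * M) ^ K + 1 * M * (K + 1)! * (3 * M) ^ K + M * (K ! * (3 * M) ^ K)
      ≤ (K + 1)! * (3 * M) ^ (K + 1) := by
    rw [Nat.factorial_succ, pow_succ]
    push_cast
    nlinarith [mul_nonneg (mul_nonneg hM hP) (Nat.cast_nonneg K : (0 : ℝ) ≤ K)]
  linarith [abs_sub (iteratedDeriv K S t - iteratedDeriv K (fun s => z s i * S s) t)
    (γ i * iteratedDeriv K (fun s => z s i) t),
    abs_sub (iteratedDeriv K S t) (iteratedDeriv K (fun s => z s i * S s) t), hSb K le_rfl]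

end SIS

theorem cauchyBounds_sum_mul_sq {ι : Type*} [Fintype ι] {π : ι → ℝ} {d : ι → ι → ℝ}
    {u : ι → ℝ → ℝ} {M ρ : ℝ} (hπ : ∀ i, 0 ≤ π i) (hπ1 : ∑ i, π i = 1)
    (hd : ∀ i, ∑ j, |d i j| ≤ M) (hρ : 0 ≤ ρ) (hu : ∀ j, ContDiffOn ℝ ∞ (u j) (Ioi 0))
    (hub : ∀ k j, ∀ t > 0, |iteratedDeriv k (u j) t| ≤ k ! * ρ ^ k) :
    CauchyBounds (M ^ 2) (2 * ρ) fun t => ∑ i, π i * (∑ j, d i j * u j t) ^ 2 := by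
  set g : ι → ℝ → ℝ := fun i t => ∑ j, d i j * u j t
  have hg : ∀ i, ContDiffOn ℝ ∞ (g i) (Ioi 0) :=
    fun i => ContDiffOn.sum fun j _ => contDiffOn_const.mul (hu j)
  refine ⟨ContDiffOn.sum fun i _ => contDiffOn_const.mul ((hg i).pow 2), fun k t ht => ?_⟩
  have hat : ∀ {m : ℕ} {v : ℝ → ℝ}, ContDiffOn ℝ ∞ v (Ioi 0) → ContDiffAt ℝ m v t :=
    fun hv => (hv.contDiffAt (Ioi_mem_nhds ht)).of_le (by exact_mod_cast le_top)
  have hgb : ∀ i, ∀ m ≤ k, |iteratedDeriv m (g i) t| ≤ M * m ! * ρ ^ m := fun i m _ =>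
    (abs_iteratedDeriv_sum_mul_le (d i) (fun j => hat (hu j)) (fun j => hub m j t ht)).trans
      (by rw [mul_assoc]; gcongr; exact hd i)
  have hsq : ∀ i, |iteratedDeriv k (fun s => g i s ^ 2) t| ≤ M * M * (k + 1)! * ρ ^ k := by
    intro i
    simp only [sq]
    exact abs_iteratedDeriv_mul_le (hat (hg i)) (hat (hg i)) hρ (hgb i) (hgb i)
  calc |iteratedDeriv k (fun t => ∑ i, π i * g i t ^ 2) t|
      ≤ (∑ i, |π i|) * (M * M * (k + 1)! * ρ ^ k) :=
        abs_iteratedDeriv_sum_mul_le π (fun i => hat ((hg i).pow 2)) hsq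
    _ ≤ M ^ 2 * k ! * (2 * ρ) ^ k := by
        simp only [abs_of_nonneg (hπ _), hπ1, one_mul, mul_pow, Nat.factorial_succ]
        push_cast
        have h2k : (k : ℝ) + 1 ≤ 2 ^ k := by exact_mod_cast k.lt_two_pow_self
        have : 0 ≤ M ^ 2 * k ! * ρ ^ k := by positivity
        nlinarith

theorem sum_abs_mul_le_of_sum_eq_one {ι : Type*} [Fintype ι] {c π : ι → ℝ} {M : ℝ}
    (hc : ∀ j, |c j| ≤ M) (hπ : ∀ j, 0 ≤ π j) (hπ1 : ∑ j, π j = 1) :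
    ∑ j, |c j * π j| ≤ M := by
  calc ∑ j, |c j * π j| ≤ ∑ j, M * π j := sum_le_sum fun j _ => by
        rw [abs_mul, abs_of_nonneg (hπ j)]; exact mul_le_mul_of_nonneg_right (hc j) (hπ j)
    _ = M := by rw [← mul_sum, hπ1, mul_one]

section Discrepancy

variable {ι : Type*} [Fintype ι] {W W' : Matrix ι ι ℝ} {π γ : ι → ℝ} {z : ℝ → ι → ℝ}

/-- The integrand of `H_{2,T}² = ∫₀ᵀ sisDiscrepancy W Ŵ π z t dt`. -/
def sisDiscrepancy (W W' : Matrix ι ι ℝ) (π : ι → ℝ) (z : ℝ → ι → ℝ) (t : ℝ) : ℝ :=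
  ∑ i, ((∑ j, W i j * π j * z t j) - (∑ j, W' i j * π j * z t j)) ^ 2 * π i

theorem sisDiscrepancy_eq :
    sisDiscrepancy W W' π z = fun t => ∑ i, π i * (∑ j, (W i j - W' i j) * π j * z t j) ^ 2 := by
  ext t
  refine sum_congr rfl fun i _ => ?_
  rw [← sum_sub_distrib, mul_comm]
  simp only [sub_mul]

theorem sisDiscrepancy_nonneg (hπ : ∀ i, 0 ≤ π i) (t : ℝ) : 0 ≤ sisDiscrepancy W W' π z t :=
  sum_nonneg fun i _ => mul_nonneg (sq_nonneg _) (hπ i)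

theorem continuousOn_sisDiscrepancy (hz : ∀ i, ContinuousOn (fun t => z t i) (Ici 0)) :
    ContinuousOn (sisDiscrepancy W W' π z) (Ici 0) := by
  unfold sisDiscrepancy
  fun_prop

theorem cauchyBounds_sisDiscrepancy {M : ℝ} (hM : 0 ≤ M) (hW : ∀ i j, W i j ∈ Icc 0 M)
    (hW' : ∀ i j, W' i j ∈ Icc 0 M) (hπ : ∀ i, 0 ≤ π i) (hπ1 : ∑ i, π i = 1)
    (hγ : ∀ i, γ i ∈ Icc 0 M)
    (hode : ∀ i, ∀ t ∈ Ici (0 : ℝ), HasDerivWithinAt (fun s => z s i)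
      ((1 - z t i) * (∑ j, W i j * π j * z t j) - γ i * z t i) (Ici 0) t)
    (hz : ∀ t ∈ Ici (0 : ℝ), ∀ i, z t i ∈ Icc (0 : ℝ) 1) :
    CauchyBounds (M ^ 2) (2 * (3 * M)) (sisDiscrepancy W W' π z) := by
  have hWrow : ∀ i, ∑ j, |W i j * π j| ≤ M := fun i => sum_abs_mul_le_of_sum_eq_one
    (fun j => by rw [abs_of_nonneg (hW i j).1]; exact (hW i j).2) hπ hπ1
  have hdrow : ∀ i, ∑ j, |(W i j - W' i j) * π j| ≤ M := fun i =>
    sum_abs_mul_le_of_sum_eq_one (fun j => abs_sub_le_iff.2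
      ⟨by linarith [(hW i j).2, (hW' i j).1], by linarith [(hW i j).1, (hW' i j).2]⟩) hπ hπ1
  rw [sisDiscrepancy_eq]
  exact cauchyBounds_sum_mul_sq hπ hπ1 hdrow (by positivity) (contDiffOn_sis hode)
    fun k j t ht => abs_iteratedDeriv_sis_le hWrow
      (fun i => by rw [abs_of_nonneg (hγ i).1]; exact (hγ i).2) hode
      (fun t ht i => abs_le.2 ⟨by linarith [(hz t ht.le i).1], (hz t ht.le i).2⟩) k j t ht

end Discrepancy

/-- Uniform robustness of the prediction problem: for fixed `M` and `0 < T₀ ≤ T`,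
for every `ε > 0` there is a `δ > 0`, independent of the dimension `n` and of the
parameters, such that for all SIS parameters with weights and curing rates in `[0,M]`
and every symmetric `Ŵ` with entries in `[0,M]`: `H_{2,T₀} < δ ⟹ H_{2,T} < ε`. -/
theorem stmt_12 (M T₀ T : ℝ) (hM : 0 < M) (hT₀ : 0 < T₀) (hTT : T₀ ≤ T) :
    ∀ ε > (0 : ℝ), ∃ δ > (0 : ℝ), ∀ n : ℕ, 0 < n →
      ∀ (W W' : Matrix (Fin n) (Fin n) ℝ) (pv γ : Fin n → ℝ) (z : ℝ → Fin n → ℝ),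
        W.IsSymm → (∀ i j, W i j ∈ Set.Icc (0 : ℝ) M) →
        W'.IsSymm → (∀ i j, W' i j ∈ Set.Icc (0 : ℝ) M) →
        (∀ i, pv i ≥ 0) → (∑ i, pv i = 1) →
        (∀ i, γ i ∈ Set.Icc (0 : ℝ) M) →
        (∀ i, z 0 i ∈ Set.Icc (0 : ℝ) 1) →
        (∀ i, ∀ t ∈ Set.Ici (0 : ℝ), HasDerivWithinAt (fun s => z s i)
          ((1 - z t i) * (∑ j, W i j * pv j * z t j) - γ i * z t i) (Set.Ici 0) t) →
        (∀ t ∈ Set.Ici (0 : ℝ), ∀ i, z t i ∈ Set.Icc (0 : ℝ) 1) →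
        Real.sqrt (∫ t in (0 : ℝ)..T₀,
          ∑ i, ((∑ j, W i j * pv j * z t j) - (∑ j, W' i j * pv j * z t j)) ^ 2 * pv i)
            < δ →
        Real.sqrt (∫ t in (0 : ℝ)..T,
          ∑ i, ((∑ j, W i j * pv j * z t j) - (∑ j, W' i j * pv j * z t j)) ^ 2 * pv i)
            < ε := by
  intro ε hε
  obtain ⟨δ, hδ, hintegral⟩ := exists_integral_lt_of_integral_lt (C := M ^ 2) (R := 2 * (3 * M))
    (by positivity) (by positivity) hT₀ hTT (ε ^ 2) (by positivity)
  refine ⟨√δ, Real.sqrt_pos.2 hδ, fun n _ W W' pv γ z _ hW _ hW' hpv hpv1 hγ _ hode hz hsmall => ?_⟩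
  rw [Real.sqrt_lt' hε]
  refine hintegral (sisDiscrepancy W W' pv z)
    (cauchyBounds_sisDiscrepancy hM.le hW hW' hpv hpv1 hγ hode hz)
    (continuousOn_sisDiscrepancy fun i t ht => (hode i t ht).continuousWithinAt)
    (fun t _ => sisDiscrepancy_nonneg hpv t) ?_
  rwa [Real.sqrt_lt' (Real.sqrt_pos.2 hδ), Real.sq_sqrt hδ.le] at hsmall
end

section
/- Let p = (W, z(0), γ, π) be SIS parameters with W symmetric and nonnegative, z(0) ∈ [0,1]ⁿ, γ nonnegative, π nonnegative with Σ_i π_i = 1, with trajectory z, and let 0 < T₀ ≤ T. Then there exists a constant Λ (depending on p, T₀ and T) such that for every n×n matrix Ŵ (with Â := ŴΠ): H_{2,T} ≤ Λ·H_{2,T₀}. Equivalently, there exists Λ such that ‖v‖_{G(T)} ≤ Λ·‖v‖_{G(T₀)} for all v ∈ ℝⁿ, where ‖v‖²_{G(T)} := ∫₀^T ⟨v, z(t)⟩² dt. -/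
/-!
For `b ≥ 0`, `‖v‖_{G(b)}` is the norm in `L²(0,b)` of `t ↦ ⟨v, z t⟩`, so it comes from a linear map
`ℝⁿ → L²(0,b)`. If `⟨v, z⟩` vanishes a.e. on `(0,T₀)`, it vanishes on an open interval, so by
analyticity it vanishes on `[0,∞)`. Hence the kernel of the map for `T₀` lies in the kernel of
the map for `T`, and on the finite-dimensional space `ℝⁿ` this kernel inclusion gives a constant `Λ`.
`H_{2,T}` is the `π`-weighted `ℓ²` sum of these seminorms over the rows of `(W - Ŵ)Π`, so the same
`Λ` bounds it.
-/

open MeasureTheory Set Filter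

theorem LinearMap.exists_norm_le_mul_norm_of_ker_le {𝕜 V E F : Type*} [NontriviallyNormedField 𝕜]
    [CompleteSpace 𝕜] [AddCommGroup V] [Module 𝕜 V] [FiniteDimensional 𝕜 V]
    [NormedAddCommGroup E] [NormedSpace 𝕜 E] [NormedAddCommGroup F] [NormedSpace 𝕜 F]
    (A : V →ₗ[𝕜] E) (B : V →ₗ[𝕜] F) (h : LinearMap.ker A ≤ LinearMap.ker B) :
    ∃ C, 0 ≤ C ∧ ∀ v, ‖B v‖ ≤ C * ‖A v‖ := by
  -- `B` factors through the finite-dimensional space `range A`, where every linear map is bounded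
  let D : LinearMap.range A →L[𝕜] F :=
    LinearMap.toContinuousLinearMap ((LinearMap.ker A).liftQ B h ∘ₗ A.quotKerEquivRange.symm)
  refine ⟨‖D‖, norm_nonneg D, fun v => ?_⟩
  have hD : D ⟨A v, LinearMap.mem_range_self A v⟩ = B v := by
    simp [D, LinearMap.quotKerEquivRange_symm_apply_image]
  rw [← hD]
  exact D.le_opNorm _

theorem ContinuousOn.memLp_restrict_Ioc {E : Type*} [NormedAddCommGroup E] {f : ℝ → E}
    {a b : ℝ} {p : ENNReal} (hf : ContinuousOn f (Icc a b)) :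
    MemLp f p (volume.restrict (Ioc a b)) := by
  obtain ⟨C, hC⟩ := isCompact_Icc.exists_bound_of_continuousOn hf
  exact MemLp.of_bound ((hf.mono Ioc_subset_Icc_self).aestronglyMeasurable measurableSet_Ioc) C
    ((ae_restrict_iff' measurableSet_Ioc).2 (Eventually.of_forall fun t ht =>
      hC t (Ioc_subset_Icc_self ht)))

theorem AnalyticOnNhd.eqOn_zero_of_ae_eq_zero_Ioo {E : Type*} [NormedAddCommGroup E]
    [NormedSpace ℝ E] {f : ℝ → E} {U : Set ℝ} (hf : AnalyticOnNhd ℝ f U) (hU : IsPreconnected U)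
    {a b : ℝ} (hab : a < b) (hsub : Ioo a b ⊆ U) (h0 : f =ᵐ[volume.restrict (Ioo a b)] 0) :
    EqOn f 0 U := by
  have hIoo : EqOn f 0 (Ioo a b) :=
    Measure.eqOn_Ioo_of_ae_eq volume h0 (hf.continuousOn.mono hsub) continuousOn_const
  obtain ⟨c, hc⟩ := nonempty_Ioo.2 hab
  exact hf.eqOn_zero_of_preconnected_of_eventuallyEq_zero hU (hsub hc)
    (eventually_of_mem (Ioo_mem_nhds hc.1 hc.2) hIoo)

theorem MeasureTheory.MemLp.norm_toLp_sq {α : Type*} [MeasurableSpace α] {μ : Measure α}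
    {f : α → ℝ} (hf : MemLp f 2 μ) : ‖hf.toLp f‖ ^ 2 = ∫ x, f x ^ 2 ∂μ := by
  rw [← real_inner_self_eq_norm_sq, L2.inner_def]
  exact integral_congr_ae (hf.coeFn_toLp.mono fun x hx => by simp [hx, sq])

section LinearCombination

variable {α ι : Type*} [MeasurableSpace α] [Fintype ι] {μ : Measure α} {z : α → ι → ℝ}

theorem memLp_sum_mul {p : ENNReal} (hz : ∀ i, MemLp (fun t => z t i) p μ) (v : ι → ℝ) :
    MemLp (fun t => ∑ i, v i * z t i) p μ :=
  memLp_finsetSum _ fun i _ => (hz i).const_mul (v i)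

noncomputable def linearCombinationL2 (hz : ∀ i, MemLp (fun t => z t i) 2 μ) :
    (ι → ℝ) →ₗ[ℝ] Lp ℝ 2 μ where
  toFun v := (memLp_sum_mul hz v).toLp _
  map_add' v w := by
    rw [← MemLp.toLp_add]
    exact MemLp.toLp_congr _ _ (Eventually.of_forall fun t => by
      simp [add_mul, Finset.sum_add_distrib])
  map_smul' c v := by
    rw [RingHom.id_apply, ← MemLp.toLp_const_smul]
    exact MemLp.toLp_congr _ _ (Eventually.of_forall fun t => by
      simp [Finset.mul_sum, mul_assoc])

variable (hz : ∀ i, MemLp (fun t => z t i) 2 μ)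

theorem norm_linearCombinationL2_sq (v : ι → ℝ) :
    ‖linearCombinationL2 hz v‖ ^ 2 = ∫ t, (∑ i, v i * z t i) ^ 2 ∂μ :=
  (memLp_sum_mul hz v).norm_toLp_sq

theorem linearCombinationL2_eq_zero_iff (v : ι → ℝ) :
    linearCombinationL2 hz v = 0 ↔ (fun t => ∑ i, v i * z t i) =ᵐ[μ] 0 :=
  Lp.eq_zero_iff_ae_eq_zero.trans
    ⟨(memLp_sum_mul hz v).coeFn_toLp.symm.trans, (memLp_sum_mul hz v).coeFn_toLp.trans⟩

end LinearCombination

section Trajectory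

variable {ι : Type*} [Fintype ι] {z : ℝ → ι → ℝ}

noncomputable def trajectoryL2 (hz : ∀ i, ContinuousOn (fun t => z t i) (Ici 0)) (b : ℝ) :
    (ι → ℝ) →ₗ[ℝ] Lp ℝ 2 (volume.restrict (Ioc 0 b)) :=
  linearCombinationL2 fun i => ((hz i).mono Icc_subset_Ici_self).memLp_restrict_Ioc

theorem norm_trajectoryL2_sq (hz : ∀ i, ContinuousOn (fun t => z t i) (Ici 0)) {b : ℝ}
    (hb : 0 ≤ b) (v : ι → ℝ) :
    ‖trajectoryL2 hz b v‖ ^ 2 = ∫ t in 0..b, (∑ i, v i * z t i) ^ 2 := by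
  rw [intervalIntegral.integral_of_le hb]
  exact norm_linearCombinationL2_sq _ v

theorem integral_sum_sq_mul_eq {κ : Type*} [Fintype κ]
    (hz : ∀ i, ContinuousOn (fun t => z t i) (Ici 0)) {b : ℝ} (hb : 0 ≤ b)
    (M : κ → ι → ℝ) (w : κ → ℝ) :
    ∫ t in 0..b, ∑ k, (∑ i, M k i * z t i) ^ 2 * w k
      = ∑ k, ‖trajectoryL2 hz b (M k)‖ ^ 2 * w k := by
  have hzb : ∀ i, ContinuousOn (fun t => z t i) (uIcc 0 b) := fun i =>
    (hz i).mono (by simp [uIcc_of_le hb, Icc_subset_Ici_self])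
  rw [intervalIntegral.integral_finsetSum fun k _ => ContinuousOn.intervalIntegrable (by fun_prop)]
  simp_rw [intervalIntegral.integral_mul_const, norm_trajectoryL2_sq hz hb]

theorem ker_trajectoryL2_le (hz : ∀ i, AnalyticOnNhd ℝ (fun t => z t i) (Ici 0)) {T₀ T : ℝ}
    (hT₀ : 0 < T₀) :
    LinearMap.ker (trajectoryL2 (fun i => (hz i).continuousOn) T₀)
      ≤ LinearMap.ker (trajectoryL2 (fun i => (hz i).continuousOn) T) := by
  intro v hv
  rw [LinearMap.mem_ker, trajectoryL2, linearCombinationL2_eq_zero_iff] at hv ⊢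
  have hf : AnalyticOnNhd ℝ (fun t => ∑ i, v i * z t i) (Ici 0) :=
    Finset.analyticOnNhd_fun_sum _ fun i _ => analyticOnNhd_const.mul (hz i)
  have hzero := hf.eqOn_zero_of_ae_eq_zero_Ioo isPreconnected_Ici hT₀
    (Ioo_subset_Ioi_self.trans Ioi_subset_Ici_self)
    (ae_restrict_of_ae_restrict_of_subset Ioo_subset_Ioc_self hv)
  exact (ae_restrict_iff' measurableSet_Ioc).2
    (Eventually.of_forall fun t ht => hzero (mem_Ici.2 ht.1.le))

end Trajectory

theorem Real.sqrt_sum_sq_mul_le {κ : Type*} [Fintype κ] {a b w : κ → ℝ} {Λ : ℝ} (hΛ : 0 ≤ Λ)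
    (ha : ∀ k, 0 ≤ a k) (hw : ∀ k, 0 ≤ w k) (hab : ∀ k, a k ≤ Λ * b k) :
    √(∑ k, a k ^ 2 * w k) ≤ Λ * √(∑ k, b k ^ 2 * w k) := by
  rw [← Real.sqrt_sq hΛ, ← Real.sqrt_mul (sq_nonneg Λ), Finset.mul_sum]
  refine Real.sqrt_le_sqrt (Finset.sum_le_sum fun k _ => ?_)
  calc a k ^ 2 * w k ≤ (Λ * b k) ^ 2 * w k := by gcongr; exacts [hw k, ha k, hab k]
    _ = Λ ^ 2 * (b k ^ 2 * w k) := by ring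

theorem stmt_13_general {n : ℕ} (W : Matrix (Fin n) (Fin n) ℝ) (pv : Fin n → ℝ)
    (z : ℝ → Fin n → ℝ)
    (hpv : ∀ i, 0 ≤ pv i)
    (hzan : ∀ i, AnalyticOnNhd ℝ (fun t => z t i) (Set.Ici (0 : ℝ)))
    (T₀ T : ℝ) (hT₀ : 0 < T₀) (hTT : T₀ ≤ T) :
    (∃ Λ : ℝ, ∀ W' : Matrix (Fin n) (Fin n) ℝ,
      Real.sqrt (∫ t in (0 : ℝ)..T,
        ∑ i, ((∑ j, W i j * pv j * z t j) - (∑ j, W' i j * pv j * z t j)) ^ 2 * pv i)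
      ≤ Λ * Real.sqrt (∫ t in (0 : ℝ)..T₀,
        ∑ i, ((∑ j, W i j * pv j * z t j) - (∑ j, W' i j * pv j * z t j)) ^ 2 * pv i)) ∧
    (∃ Λ : ℝ, ∀ v : Fin n → ℝ,
      Real.sqrt (∫ t in (0 : ℝ)..T, (∑ i, v i * z t i) ^ 2)
        ≤ Λ * Real.sqrt (∫ t in (0 : ℝ)..T₀, (∑ i, v i * z t i) ^ 2)) := by
  have hzc : ∀ i, ContinuousOn (fun t => z t i) (Ici 0) := fun i => (hzan i).continuousOn
  have hT : 0 ≤ T := hT₀.le.trans hTT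
  obtain ⟨Λ, hΛ, hle⟩ := (trajectoryL2 hzc T₀).exists_norm_le_mul_norm_of_ker_le
    (trajectoryL2 hzc T) (ker_trajectoryL2_le hzan hT₀)
  refine ⟨⟨Λ, fun W' => ?_⟩, ⟨Λ, fun v => ?_⟩⟩
  · have hrow : ∀ t i, (∑ j, W i j * pv j * z t j) - (∑ j, W' i j * pv j * z t j)
        = ∑ j, (W i j - W' i j) * pv j * z t j := fun t i => by
      rw [← Finset.sum_sub_distrib]
      exact Finset.sum_congr rfl fun j _ => by ring
    simp_rw [hrow]
    rw [integral_sum_sq_mul_eq hzc hT, integral_sum_sq_mul_eq hzc hT₀.le]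
    exact Real.sqrt_sum_sq_mul_le hΛ (fun _ => norm_nonneg _) hpv fun _ => hle _
  · rw [← norm_trajectoryL2_sq hzc hT, ← norm_trajectoryL2_sq hzc hT₀.le,
      Real.sqrt_sq (norm_nonneg _), Real.sqrt_sq (norm_nonneg _)]
    exact hle v

/-- For fixed SIS parameters `p` and `0 < T₀ ≤ T` there is a constant `Λ = Λ(p,T₀,T)`
such that `H_{2,T} ≤ Λ · H_{2,T₀}` for every matrix `Ŵ`; equivalently there is a `Λ`
with `‖v‖_{G(T)} ≤ Λ ‖v‖_{G(T₀)}` for all `v ∈ ℝⁿ`. -/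
theorem stmt_13 {n : ℕ} (W : Matrix (Fin n) (Fin n) ℝ) (pv γ : Fin n → ℝ)
    (z : ℝ → Fin n → ℝ)
    (hWsymm : W.IsSymm) (hWpos : ∀ i j, 0 ≤ W i j)
    (hpv : ∀ i, 0 ≤ pv i) (hpv1 : ∑ i, pv i = 1) (hγ : ∀ i, 0 ≤ γ i)
    (hz0 : ∀ i, z 0 i ∈ Set.Icc (0 : ℝ) 1)
    (hode : ∀ i, ∀ t ∈ Set.Ici (0 : ℝ), HasDerivWithinAt (fun s => z s i)
      ((1 - z t i) * (∑ j, W i j * pv j * z t j) - γ i * z t i) (Set.Ici 0) t)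
    (hz01 : ∀ t ∈ Set.Ici (0 : ℝ), ∀ i, z t i ∈ Set.Icc (0 : ℝ) 1)
    (hzan : ∀ i, AnalyticOnNhd ℝ (fun t => z t i) (Set.Ici (0 : ℝ)))
    (T₀ T : ℝ) (hT₀ : 0 < T₀) (hTT : T₀ ≤ T) :
    (∃ Λ : ℝ, ∀ W' : Matrix (Fin n) (Fin n) ℝ,
      Real.sqrt (∫ t in (0 : ℝ)..T,
        ∑ i, ((∑ j, W i j * pv j * z t j) - (∑ j, W' i j * pv j * z t j)) ^ 2 * pv i)
      ≤ Λ * Real.sqrt (∫ t in (0 : ℝ)..T₀,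
        ∑ i, ((∑ j, W i j * pv j * z t j) - (∑ j, W' i j * pv j * z t j)) ^ 2 * pv i)) ∧
    (∃ Λ : ℝ, ∀ v : Fin n → ℝ,
      Real.sqrt (∫ t in (0 : ℝ)..T, (∑ i, v i * z t i) ^ 2)
        ≤ Λ * Real.sqrt (∫ t in (0 : ℝ)..T₀, (∑ i, v i * z t i) ^ 2)) :=
  stmt_13_general W pv z hpv hzan T₀ T hT₀ hTT
end

section
/- Let 0 < T₀ ≤ T, let u : [0,T] × [0,1] → [0,1] be jointly measurable, and let N be a positive integer. Define λ_N := sup over f ∈ L²([0,1]) with ‖f‖₂ = 1 of (∫₀^T ⟨f, u(t)⟩² dt) / (∫₀^{T₀} ⟨f, u(t)⟩² dt + 1/N). Then the supremum is attained in the closed unit ball: there exists f ∈ L²([0,1]) with ‖f‖₂ ≤ 1 such that λ_N = (∫₀^T ⟨f, u(t)⟩² dt) / (∫₀^{T₀} ⟨f, u(t)⟩² dt + 1/N). -/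
/-!
Identify `f` with the functional `⟨f, ·⟩` on `L²([0,1])`. The maps `f ↦ ∫ ⟨f, u(t)⟩² dt` are
continuous for the weak-* topology on the closed unit ball: pointwise in `t` this is the definition
of that topology, the integrands are bounded by `1`, and the ball is metrizable because `L²` is
separable, so dominated convergence applies. By Banach–Alaoglu the quotient therefore attains its
maximum over the ball. Since both Gram forms are quadratic and `1/N > 0`, rescaling a nonzero
maximizer to the unit sphere can only increase the quotient, so the maximum over the ball is the
supremum over the sphere.
-/

open MeasureTheory Set
open scoped RealInnerProductSpace ENNReal

section WeakDual

variable {E α : Type*} [NormedAddCommGroup E] [NormedSpace ℝ E]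
  [TopologicalSpace.SeparableSpace E] [MeasurableSpace α] {ν : Measure α} [IsFiniteMeasure ν]
  {U : α → E} {C : ℝ}

theorem WeakDual.continuousOn_integral_apply_sq
    (hU : ∀ φ : StrongDual ℝ E, AEStronglyMeasurable (fun t => φ (U t)) ν)
    (hUC : ∀ᵐ t ∂ν, ‖U t‖ ≤ C) (r : ℝ) :
    ContinuousOn (fun φ : WeakDual ℝ E => ∫ t, φ (U t) ^ 2 ∂ν)
      (toStrongDual ⁻¹' Metric.closedBall 0 r) := by
  set K := toStrongDual ⁻¹' Metric.closedBall (0 : StrongDual ℝ E) r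
  -- dominated convergence needs a first-countable domain
  have : TopologicalSpace.MetrizableSpace K :=
    metrizable_of_isCompact ℝ E K (isCompact_closedBall 0 r)
  rw [continuousOn_iff_continuous_domRestrict]
  refine continuous_of_dominated (bound := fun _ => (r * C) ^ 2)
    (fun φ => (hU (toStrongDual φ.1)).pow 2) (fun φ => ?_) (integrable_const _)
    (.of_forall fun t => ((eval_continuous (U t)).comp continuous_subtype_val).pow 2)
  filter_upwards [hUC] with t ht
  have hφ : ‖toStrongDual (φ : WeakDual ℝ E)‖ ≤ r := mem_closedBall_zero_iff.mp φ.2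
  have hle : |(φ : WeakDual ℝ E) (U t)| ≤ r * C :=
    ((toStrongDual (φ : WeakDual ℝ E)).le_opNorm (U t)).trans
      (mul_le_mul hφ ht (norm_nonneg _) ((norm_nonneg _).trans hφ))
  simpa [Real.norm_eq_abs, abs_pow] using pow_le_pow_left₀ (abs_nonneg _) hle 2

end WeakDual

section Gram

variable {H α : Type*} [NormedAddCommGroup H] [InnerProductSpace ℝ H] [MeasurableSpace α]

noncomputable def gramSq (ν : Measure α) (U : α → H) (h : H) : ℝ := ∫ t, ⟪h, U t⟫ ^ 2 ∂ν

noncomputable def gramQuotient (ν ν' : Measure α) (c : ℝ) (U : α → H) (h : H) : ℝ :=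
  gramSq ν U h / (gramSq ν' U h + c)

variable {ν ν' : Measure α} {U : α → H} {c : ℝ}

theorem gramSq_nonneg (h : H) : 0 ≤ gramSq ν U h :=
  integral_nonneg fun _ => sq_nonneg _

theorem gramSq_smul (s : ℝ) (h : H) : gramSq ν U (s • h) = s ^ 2 * gramSq ν U h := by
  simp only [gramSq, inner_smul_left, mul_pow, integral_const_mul, conj_trivial]

theorem gramQuotient_nonneg (hc : 0 ≤ c) (h : H) : 0 ≤ gramQuotient ν ν' c U h :=
  div_nonneg (gramSq_nonneg h) (add_nonneg (gramSq_nonneg h) hc)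

@[simp]
theorem gramQuotient_zero : gramQuotient ν ν' c U 0 = 0 := by
  simp [gramQuotient, gramSq]

theorem gramQuotient_le_smul (hc : 0 < c) (h : H) {s : ℝ} (hs : 1 ≤ |s|) :
    gramQuotient ν ν' c U h ≤ gramQuotient ν ν' c U (s • h) := by
  have hA := gramSq_nonneg (ν := ν) (U := U) h
  have hB := gramSq_nonneg (ν := ν') (U := U) h
  have hs2 : 1 ≤ s ^ 2 := by simpa [sq_abs] using one_le_pow₀ hs (n := 2)
  rw [gramQuotient, gramQuotient, gramSq_smul, gramSq_smul,
    div_le_div_iff₀ (by positivity) (by positivity)]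
  nlinarith [mul_nonneg (mul_nonneg hA hc.le) (sub_nonneg.2 hs2)]

variable [CompleteSpace H] [TopologicalSpace.SeparableSpace H] {C : ℝ}
  (hU : ∀ h, Measurable fun t => ⟪h, U t⟫) (hUC : ∀ t, ‖U t‖ ≤ C)
include hU hUC

theorem continuousOn_gramSq_toDual_symm [IsFiniteMeasure ν] (r : ℝ) :
    ContinuousOn
      (fun φ : WeakDual ℝ H =>
        gramSq ν U ((InnerProductSpace.toDual ℝ H).symm (WeakDual.toStrongDual φ)))
      (WeakDual.toStrongDual ⁻¹' Metric.closedBall 0 r) := by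
  simp only [gramSq, InnerProductSpace.toDual_symm_apply]
  refine WeakDual.continuousOn_integral_apply_sq (fun φ => ?_) (.of_forall hUC) r
  simpa only [InnerProductSpace.toDual_symm_apply] using
    (hU ((InnerProductSpace.toDual ℝ H).symm φ)).aestronglyMeasurable

variable [IsFiniteMeasure ν] [IsFiniteMeasure ν']

theorem exists_isMaxOn_gramQuotient_closedBall (hc : 0 < c) {r : ℝ} (hr : 0 ≤ r) :
    ∃ h ∈ Metric.closedBall 0 r,
      IsMaxOn (gramQuotient ν ν' c U) (Metric.closedBall 0 r) h := by
  set riesz : WeakDual ℝ H → H :=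
    fun φ => (InnerProductSpace.toDual ℝ H).symm (WeakDual.toStrongDual φ)
  have hcont : ContinuousOn (gramQuotient ν ν' c U ∘ riesz)
      (WeakDual.toStrongDual ⁻¹' Metric.closedBall 0 r) :=
    (continuousOn_gramSq_toDual_symm (ν := ν) hU hUC r).div
      ((continuousOn_gramSq_toDual_symm (ν := ν') hU hUC r).add continuousOn_const)
      fun φ _ => (add_pos_of_nonneg_of_pos (gramSq_nonneg _) hc).ne'
  obtain ⟨φ, hφ, hmax⟩ :=
    (WeakDual.isCompact_closedBall 0 r).exists_isMaxOn ⟨0, by simpa using hr⟩ hcont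
  refine ⟨riesz φ, by simpa [riesz] using hφ, isMaxOn_iff.2 fun g hg => ?_⟩
  simpa [riesz] using isMaxOn_iff.1 hmax
    (StrongDual.toWeakDual (InnerProductSpace.toDual ℝ H g)) (by simpa using hg)

theorem exists_norm_eq_one_isMaxOn_gramQuotient [Nontrivial H] (hc : 0 < c) :
    ∃ h : H, ‖h‖ = 1 ∧ IsMaxOn (gramQuotient ν ν' c U) (Metric.closedBall 0 1) h := by
  obtain ⟨h₀, hh₀, hmax⟩ :=
    exists_isMaxOn_gramQuotient_closedBall (ν := ν) (ν' := ν') hU hUC hc zero_le_one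
  suffices ∃ e : H, ‖e‖ = 1 ∧ gramQuotient ν ν' c U h₀ ≤ gramQuotient ν ν' c U e by
    obtain ⟨e, he, hle⟩ := this
    exact ⟨e, he, isMaxOn_iff.2 fun g hg => (isMaxOn_iff.1 hmax g hg).trans hle⟩
  rcases eq_or_ne h₀ 0 with rfl | hne
  · obtain ⟨e, he⟩ := exists_norm_eq H zero_le_one
    exact ⟨e, he, by simpa using gramQuotient_nonneg hc.le e⟩
  · refine ⟨‖h₀‖⁻¹ • h₀, norm_smul_inv_norm hne, gramQuotient_le_smul hc h₀ ?_⟩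
    rw [abs_inv, abs_norm]
    exact one_le_inv₀ (norm_pos_iff.2 hne) |>.2 (mem_closedBall_zero_iff.1 hh₀)

end Gram

section L2

variable {β : Type*} [MeasurableSpace β] {μ : Measure β}

theorem memLp_two_of_integral_sq_ne_zero {g : β → ℝ} (hg : AEStronglyMeasurable g μ)
    (h : ∫ x, g x ^ 2 ∂μ ≠ 0) : MemLp g 2 μ :=
  (memLp_two_iff_integrable_sq hg).2 (Integrable.of_integral_ne_zero h)

theorem L2.norm_sq_eq_integral_sq {g : Lp ℝ 2 μ} {w : β → ℝ} (hw : g =ᵐ[μ] w) :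
    ‖g‖ ^ 2 = ∫ x, w x ^ 2 ∂μ := by
  rw [← real_inner_self_eq_norm_sq, L2.inner_def]
  refine integral_congr_ae (hw.mono fun x hx => ?_)
  simp [hx, sq]

theorem isGreatest_of_isMaxOn_closedBall {F : Lp ℝ 2 μ → ℝ} {Q : (β → ℝ) → ℝ}
    (hQ : ∀ (g : Lp ℝ 2 μ) (w : β → ℝ), g =ᵐ[μ] w → Q w = F g) {h : Lp ℝ 2 μ} (hh : ‖h‖ = 1)
    (hmax : IsMaxOn F (Metric.closedBall 0 1) h) :
    IsGreatest {r | ∃ g : β → ℝ, Measurable g ∧ ∫ x, g x ^ 2 ∂μ = 1 ∧ r = Q g} (Q h) := by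
  refine ⟨⟨h, (Lp.stronglyMeasurable h).measurable, ?_, rfl⟩, ?_⟩
  · rw [← L2.norm_sq_eq_integral_sq .rfl, hh, one_pow]
  rintro _ ⟨g, hg, hg1, rfl⟩
  have hmem := memLp_two_of_integral_sq_ne_zero hg.aestronglyMeasurable (hg1 ▸ one_ne_zero)
  rw [hQ _ g hmem.coeFn_toLp, hQ h h .rfl]
  refine isMaxOn_iff.1 hmax _ ?_
  rw [mem_closedBall_zero_iff, ← sq_le_one_iff₀ (norm_nonneg _),
    L2.norm_sq_eq_integral_sq hmem.coeFn_toLp, hg1]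

variable [IsFiniteMeasure μ]

theorem L2.nontrivial [NeZero μ] : Nontrivial (Lp ℝ 2 μ) := by
  refine nontrivial_of_ne ((memLp_const (1 : ℝ)).toLp _) 0 fun h0 => ?_
  have := L2.norm_sq_eq_integral_sq (memLp_const (1 : ℝ) (μ := μ) (p := 2)).coeFn_toLp
  simp [h0] at this
  exact (measureReal_univ_pos (μ := μ)).ne this

variable {v : ℝ → β → ℝ} {C : ℝ}

theorem memLp_two_of_abs_le (hv : Measurable (Function.uncurry v)) (hC : ∀ t x, |v t x| ≤ C)
    (t : ℝ) : MemLp (v t) 2 μ :=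
  .of_bound (hv.comp measurable_prodMk_left).aestronglyMeasurable C (.of_forall (hC t))

variable (μ) in
noncomputable def kernelLp (hv : Measurable (Function.uncurry v)) (hC : ∀ t x, |v t x| ≤ C)
    (t : ℝ) : Lp ℝ 2 μ :=
  (memLp_two_of_abs_le hv hC t).toLp (v t)

variable (hv : Measurable (Function.uncurry v)) (hC : ∀ t x, |v t x| ≤ C)
include hv hC

theorem inner_kernelLp {g : Lp ℝ 2 μ} {w : β → ℝ} (hw : g =ᵐ[μ] w) (t : ℝ) :
    ⟪g, kernelLp μ hv hC t⟫ = ∫ x, w x * v t x ∂μ := by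
  rw [L2.inner_def]
  refine integral_congr_ae ?_
  filter_upwards [hw, (memLp_two_of_abs_le hv hC t).coeFn_toLp] with x hx hvx
  simp [kernelLp, hx, hvx, mul_comm]

theorem norm_kernelLp_le [Nonempty β] (t : ℝ) :
    ‖kernelLp μ hv hC t‖ ≤ measureUnivNNReal μ ^ (2 : ℝ≥0∞).toReal⁻¹ * C := by
  refine Lp.norm_le_of_ae_bound ((abs_nonneg _).trans (hC t (Classical.arbitrary β))) ?_
  filter_upwards [(memLp_two_of_abs_le hv hC t).coeFn_toLp] with x hx
  simpa [kernelLp, hx] using hC t x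

theorem measurable_inner_kernelLp (g : Lp ℝ 2 μ) :
    Measurable fun t => ⟪g, kernelLp μ hv hC t⟫ := by
  simp_rw [inner_kernelLp hv hC (Filter.EventuallyEq.refl _ _)]
  exact ((Lp.stronglyMeasurable g).measurable.comp measurable_snd |>.mul hv).stronglyMeasurable
    |>.integral_prod_right.measurable

theorem setIntegral_sq_integral_mul_eq_gramSq {u : ℝ → β → ℝ} {ν : Measure ℝ} {s : Set ℝ}
    (hs : MeasurableSet s) (hvu : ∀ t ∈ s, v t =ᵐ[μ] u t) {g : Lp ℝ 2 μ} {w : β → ℝ}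
    (hw : g =ᵐ[μ] w) :
    ∫ t in s, (∫ x, w x * u t x ∂μ) ^ 2 ∂ν = gramSq (ν.restrict s) (kernelLp μ hv hC) g := by
  refine setIntegral_congr_fun hs fun t ht => ?_
  rw [inner_kernelLp hv hC hw]
  exact congrArg (· ^ 2) (integral_congr_ae ((hvu t ht).mono fun x hx => by simp [hx]))

variable (μ) in
theorem exists_norm_eq_one_isMaxOn_gramQuotient_kernelLp [MeasurableSpace.CountablyGenerated β]
    [NeZero μ] (ν ν' : Measure ℝ) [IsFiniteMeasure ν] [IsFiniteMeasure ν'] {c : ℝ} (hc : 0 < c) :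
    ∃ h : Lp ℝ 2 μ, ‖h‖ = 1 ∧
      IsMaxOn (gramQuotient ν ν' c (kernelLp μ hv hC)) (Metric.closedBall 0 1) h := by
  have : Fact ((2 : ℝ≥0∞) ≠ ∞) := ⟨ENNReal.ofNat_ne_top⟩
  have := L2.nontrivial (μ := μ)
  have := μ.nonempty_of_neZero
  exact exists_norm_eq_one_isMaxOn_gramQuotient (measurable_inner_kernelLp hv hC)
    (norm_kernelLp_le hv hC) hc

end L2

theorem stmt_15_general (T₀ T : ℝ) (hTT : T₀ ≤ T)
    (u : ℝ → ℝ → ℝ)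
    (humeas : Measurable (Function.uncurry u))
    (hu01 : ∀ t ∈ Set.Icc (0 : ℝ) T, ∀ x ∈ Set.Icc (0 : ℝ) 1,
      u t x ∈ Set.Icc (0 : ℝ) 1)
    (N : ℕ) (hN : 0 < N) :
    ∃ f : ℝ → ℝ, Measurable f ∧
      (∫ x in Set.Icc (0 : ℝ) 1, (f x) ^ 2) ≤ 1 ∧
      sSup {r : ℝ | ∃ g : ℝ → ℝ, Measurable g ∧
          (∫ x in Set.Icc (0 : ℝ) 1, (g x) ^ 2) = 1 ∧
          r = (∫ t in Set.Icc (0 : ℝ) T,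
                (∫ x in Set.Icc (0 : ℝ) 1, g x * u t x) ^ 2) /
              ((∫ t in Set.Icc (0 : ℝ) T₀,
                (∫ x in Set.Icc (0 : ℝ) 1, g x * u t x) ^ 2) + 1 / (N : ℝ))} =
        (∫ t in Set.Icc (0 : ℝ) T,
          (∫ x in Set.Icc (0 : ℝ) 1, f x * u t x) ^ 2) /
        ((∫ t in Set.Icc (0 : ℝ) T₀,
          (∫ x in Set.Icc (0 : ℝ) 1, f x * u t x) ^ 2) + 1 / (N : ℝ)) := by
  set μ := volume.restrict (Icc (0 : ℝ) 1)
  have : NeZero μ := ⟨by simp [μ, Measure.restrict_eq_zero]⟩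
  -- `u` is only controlled on `[0, T] × [0, 1]`; clamping it there changes none of the integrals
  set v : ℝ → ℝ → ℝ := fun t x => projIcc (0 : ℝ) 1 zero_le_one (u t x)
  have hv : Measurable (Function.uncurry v) :=
    (continuous_subtype_val.comp continuous_projIcc).measurable.comp humeas
  have hvC : ∀ t x, |v t x| ≤ 1 := fun t x =>
    abs_le.2 ⟨by linarith [(projIcc (0 : ℝ) 1 zero_le_one (u t x)).2.1],
      (projIcc (0 : ℝ) 1 zero_le_one (u t x)).2.2⟩
  have hvu : ∀ a ≤ T, ∀ t ∈ Icc 0 a, v t =ᵐ[μ] u t := fun a ha t ht =>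
    (ae_restrict_mem measurableSet_Icc).mono fun x hx =>
      congrArg Subtype.val (projIcc_of_mem _ (hu01 t (Icc_subset_Icc_right ha ht) x hx))
  have hquot : ∀ (g : Lp ℝ 2 μ) (w : ℝ → ℝ), g =ᵐ[μ] w →
      (∫ t in Icc (0 : ℝ) T, (∫ x in Icc (0 : ℝ) 1, w x * u t x) ^ 2) /
        ((∫ t in Icc (0 : ℝ) T₀, (∫ x in Icc (0 : ℝ) 1, w x * u t x) ^ 2) + 1 / (N : ℝ)) =
      gramQuotient (volume.restrict (Icc 0 T)) (volume.restrict (Icc 0 T₀)) (1 / N)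
        (kernelLp μ hv hvC) g := fun g w hw => by
    rw [gramQuotient, setIntegral_sq_integral_mul_eq_gramSq hv hvC measurableSet_Icc
      (hvu T le_rfl) hw, setIntegral_sq_integral_mul_eq_gramSq hv hvC measurableSet_Icc
      (hvu T₀ hTT) hw]
  obtain ⟨h, hh, hmax⟩ := exists_norm_eq_one_isMaxOn_gramQuotient_kernelLp μ hv hvC
    (volume.restrict (Icc 0 T)) (volume.restrict (Icc 0 T₀)) (by positivity : (0 : ℝ) < 1 / N)
  refine ⟨h, (Lp.stronglyMeasurable h).measurable, ?_,
    (isGreatest_of_isMaxOn_closedBall hquot hh hmax).csSup_eq⟩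
  rw [← L2.norm_sq_eq_integral_sq .rfl, hh, one_pow]

/-- The supremum defining `λ_N` is attained in the closed unit ball of `L²([0,1])`
(Lemma `l:lambda_eigenish`). -/
theorem stmt_15 (T₀ T : ℝ) (hT₀ : 0 < T₀) (hTT : T₀ ≤ T)
    (u : ℝ → ℝ → ℝ)
    (humeas : Measurable (Function.uncurry u))
    (hu01 : ∀ t ∈ Set.Icc (0 : ℝ) T, ∀ x ∈ Set.Icc (0 : ℝ) 1,
      u t x ∈ Set.Icc (0 : ℝ) 1)
    (N : ℕ) (hN : 0 < N) :
    ∃ f : ℝ → ℝ, Measurable f ∧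
      (∫ x in Set.Icc (0 : ℝ) 1, (f x) ^ 2) ≤ 1 ∧
      sSup {r : ℝ | ∃ g : ℝ → ℝ, Measurable g ∧
          (∫ x in Set.Icc (0 : ℝ) 1, (g x) ^ 2) = 1 ∧
          r = (∫ t in Set.Icc (0 : ℝ) T,
                (∫ x in Set.Icc (0 : ℝ) 1, g x * u t x) ^ 2) /
              ((∫ t in Set.Icc (0 : ℝ) T₀,
                (∫ x in Set.Icc (0 : ℝ) 1, g x * u t x) ^ 2) + 1 / (N : ℝ))} =
        (∫ t in Set.Icc (0 : ℝ) T,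
          (∫ x in Set.Icc (0 : ℝ) 1, f x * u t x) ^ 2) /
        ((∫ t in Set.Icc (0 : ℝ) T₀,
          (∫ x in Set.Icc (0 : ℝ) 1, f x * u t x) ^ 2) + 1 / (N : ℝ)) :=
  stmt_15_general T₀ T hTT u humeas hu01 N hN
end

section
/- (Weak regularity for the parameter set.) Fix 0 < m ≤ 1/2, m ≤ M. For every ε > 0 there exists K_max(ε) ∈ ℕ such that for every triple p = (W, u₀, γ) of measurable functions with m ≤ W(x,y) = W(y,x) ≤ M, m ≤ u₀(x) ≤ 1−m, and 0 ≤ γ(x) ≤ M for a.e. x, y ∈ [0,1], there exist K ≤ K_max(ε) and a measurable partition I₁,…,I_K of [0,1] with positive-measure parts such that the step functions W', u₀', γ'—defined on I_k × I_l and I_k by the averages w'_{kl} := (1/(|I_k||I_l|)) ∫_{I_k}∫_{I_l} W(x,y) dx dy, u'_k := (1/|I_k|) ∫_{I_k} u₀(x) dx, γ'_k := (1/|I_k|) ∫_{I_k} γ(x) dx—satisfy ‖W − W'‖_□ + ‖u₀ − u₀'‖_{L¹} + ‖γ − γ'‖_{L¹} < ε. -/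
open MeasureTheory

/-- The cut norm of a bounded measurable kernel `V` on `[0,1]²`:
`‖V‖_□ = sup_{S,S' ⊆ [0,1]} |∫_S ∫_{S'} V(x,y) dx dy|`. -/
noncomputable def cutNorm (V : ℝ → ℝ → ℝ) : ℝ :=
  sSup {r : ℝ | ∃ S S' : Set ℝ, MeasurableSet S ∧ MeasurableSet S' ∧
    S ⊆ Set.Icc 0 1 ∧ S' ⊆ Set.Icc 0 1 ∧ r = |∫ x in S, ∫ y in S', V x y|}

/-! Energy increment. Averaging over the rectangles of a partition `P` is the orthogonal
projection `E_P` onto the step functions of `P`, so the energy `‖E_P f‖₂²` is at most `M²`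
and, for a refinement `Q`, `‖E_Q f‖₂² - ‖E_P f‖₂² = ‖E_Q f - E_P f‖₂²`. If a rectangle
`S × S'` has `|∫_{S×S'} (f - E_P f)| > ε`, refining every part of `P` by `S` and `S'` gives a
partition `Q` with at most four times as many parts on which `1_{S×S'}` is a step function;
then `∫_{S×S'} (f - E_P f) = ∫_{S×S'} (E_Q f - E_P f)`, and Cauchy–Schwarz for the
probability measure raises the energy by more than `ε²`. Hence at most `M²/ε²` refinements reach cut-norm error `ε`. Starting from
the level sets of `u₀` and `γ` at mesh `ε/4` makes the one-dimensional averages `ε/4`-close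
in `L¹`, and merging the null parts into a part of positive measure changes the step
functions only on a null set. -/

open Set Function

universe u

variable {α β ι κ : Type*}

structure IsMeasurablePartition [MeasurableSpace α] (P : ι → Set α) : Prop where
  measurableSet : ∀ i, MeasurableSet (P i)
  pairwise_disjoint : Pairwise (Disjoint on P)
  iUnion_eq_univ : ⋃ i, P i = univ

def Refines (Q : κ → Set α) (P : ι → Set α) : Prop := ∀ j, ∃ i, Q j ⊆ P i

def ConstOnParts (P : ι → Set α) (g : α → ℝ) : Prop := ∀ i, ∃ c, ∀ x ∈ P i, g x = c

def partitionInter (P : ι → Set α) (Q : κ → Set α) : ι × κ → Set α := fun ij => P ij.1 ∩ Q ij.2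

def partitionProd (P : ι → Set α) (Q : κ → Set β) : ι × κ → Set (α × β) :=
  fun ij => P ij.1 ×ˢ Q ij.2

noncomputable def partitionAverage [MeasurableSpace α] [Fintype ι] (μ : Measure α)
    (P : ι → Set α) (u : α → ℝ) (x : α) : ℝ :=
  ∑ i, (P i).indicator (fun _ => ⨍ a in P i, u a ∂μ) x

lemma pairwise_disjoint_partitionProd {P : ι → Set α} {Q : κ → Set β}
    (hP : Pairwise (Disjoint on P)) (hQ : Pairwise (Disjoint on Q)) :
    Pairwise (Disjoint on partitionProd P Q) := fun ij ij' h => by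
  obtain h | h : ij.1 ≠ ij'.1 ∨ ij.2 ≠ ij'.2 := by
    by_contra! h'; exact h (Prod.ext h'.1 h'.2)
  · exact disjoint_prod.2 (Or.inl (hP h))
  · exact disjoint_prod.2 (Or.inr (hQ h))

namespace IsMeasurablePartition

variable [MeasurableSpace α] {P : ι → Set α} {Q : κ → Set α}

lemma exists_mem (hP : IsMeasurablePartition P) (x : α) : ∃ i, x ∈ P i :=
  mem_iUnion.1 (hP.iUnion_eq_univ ▸ mem_univ x)

lemma eq_of_mem (hP : IsMeasurablePartition P) {x : α} {i j : ι} (hi : x ∈ P i)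
    (hj : x ∈ P j) : i = j := by
  by_contra h
  exact (hP.pairwise_disjoint h).notMem_of_mem_left hi hj

lemma preimage [MeasurableSpace β] [MeasurableSingletonClass β] {φ : α → β}
    (hφ : Measurable φ) : IsMeasurablePartition fun b => φ ⁻¹' {b} where
  measurableSet b := hφ (measurableSet_singleton b)
  pairwise_disjoint _ _ h := (disjoint_singleton.2 h).preimage φ
  iUnion_eq_univ := eq_univ_of_forall fun x => mem_iUnion.2 ⟨φ x, rfl⟩

lemma inter (hP : IsMeasurablePartition P) (hQ : IsMeasurablePartition Q) :
    IsMeasurablePartition (partitionInter P Q) where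
  measurableSet ij := (hP.measurableSet ij.1).inter (hQ.measurableSet ij.2)
  pairwise_disjoint ij ij' h := by
    obtain h | h : ij.1 ≠ ij'.1 ∨ ij.2 ≠ ij'.2 := by
      by_contra! h'; exact h (Prod.ext h'.1 h'.2)
    · exact (hP.pairwise_disjoint h).mono inter_subset_left inter_subset_left
    · exact (hQ.pairwise_disjoint h).mono inter_subset_right inter_subset_right
  iUnion_eq_univ := eq_univ_of_forall fun x => by
    obtain ⟨i, hi⟩ := hP.exists_mem x
    obtain ⟨j, hj⟩ := hQ.exists_mem x
    exact mem_iUnion.2 ⟨(i, j), hi, hj⟩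

lemma prod [MeasurableSpace β] {Q : κ → Set β} (hP : IsMeasurablePartition P)
    (hQ : IsMeasurablePartition Q) : IsMeasurablePartition (partitionProd P Q) where
  measurableSet ij := (hP.measurableSet ij.1).prod (hQ.measurableSet ij.2)
  pairwise_disjoint := pairwise_disjoint_partitionProd hP.pairwise_disjoint hQ.pairwise_disjoint
  iUnion_eq_univ := eq_univ_of_forall fun x => by
    obtain ⟨i, hi⟩ := hP.exists_mem x.1
    obtain ⟨j, hj⟩ := hQ.exists_mem x.2
    exact mem_iUnion.2 ⟨(i, j), hi, hj⟩

end IsMeasurablePartition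

lemma refines_refl (P : ι → Set α) : Refines P P := fun i => ⟨i, subset_rfl⟩

lemma refines_partitionInter_left (P : ι → Set α) (Q : κ → Set α) :
    Refines (partitionInter P Q) P := fun ij => ⟨ij.1, inter_subset_left⟩

lemma refines_partitionInter_right (P : ι → Set α) (Q : κ → Set α) :
    Refines (partitionInter P Q) Q := fun ij => ⟨ij.2, inter_subset_right⟩

lemma Refines.trans {γ : Type*} {R : γ → Set α} {Q : κ → Set α} {P : ι → Set α}
    (hRQ : Refines R Q) (hQP : Refines Q P) : Refines R P := fun k =>
  let ⟨j, hj⟩ := hRQ k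
  let ⟨i, hi⟩ := hQP j
  ⟨i, hj.trans hi⟩

lemma Refines.partitionProd {Q : κ → Set α} {P : ι → Set α} (h : Refines Q P) :
    Refines (partitionProd Q Q) (partitionProd P P) := fun jj =>
  let ⟨i, hi⟩ := h jj.1
  let ⟨i', hi'⟩ := h jj.2
  ⟨(i, i'), prod_mono hi hi'⟩

namespace ConstOnParts

variable {P : ι → Set α} {g h : α → ℝ}

lemma of_refines {Q : κ → Set α} (hg : ConstOnParts P g) (hQP : Refines Q P) :
    ConstOnParts Q g := fun j =>
  let ⟨i, hi⟩ := hQP j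
  let ⟨c, hc⟩ := hg i
  ⟨c, fun x hx => hc x (hi hx)⟩

lemma comp₂ (hg : ConstOnParts P g) (hh : ConstOnParts P h) (F : ℝ → ℝ → ℝ) :
    ConstOnParts P fun x => F (g x) (h x) := fun i =>
  let ⟨c, hc⟩ := hg i
  let ⟨d, hd⟩ := hh i
  ⟨F c d, fun x hx => by simp only [hc x hx, hd x hx]⟩

lemma integrable_mul [MeasurableSpace α] {μ : Measure α} [IsFiniteMeasure μ] [Finite ι] {u : α → ℝ}
    (hP : IsMeasurablePartition P) (hg : ConstOnParts P g) (hu : Integrable u μ) :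
    Integrable (fun x => u x * g x) μ := by
  rw [← integrableOn_univ, ← hP.iUnion_eq_univ, integrableOn_finite_iUnion]
  intro i
  obtain ⟨c, hc⟩ := hg i
  exact IntegrableOn.congr_fun (hu.integrableOn.mul_const c) (fun x hx => by rw [hc x hx])
    (hP.measurableSet i)

lemma integrable [MeasurableSpace α] {μ : Measure α} [IsFiniteMeasure μ] [Finite ι]
    (hP : IsMeasurablePartition P) (hg : ConstOnParts P g) : Integrable g μ := by
  simpa using hg.integrable_mul hP (integrable_const (1 : ℝ))

end ConstOnParts

section partitionAverage

variable [MeasurableSpace α] [Fintype ι] {μ : Measure α} {P : ι → Set α} {u g : α → ℝ}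

lemma partitionAverage_eq_of_mem (hP : Pairwise (Disjoint on P)) {i : ι} {x : α}
    (hx : x ∈ P i) : partitionAverage μ P u x = ⨍ a in P i, u a ∂μ := by
  rw [partitionAverage, Finset.sum_eq_single i (fun j _ hji => ?_) (by simp), indicator_of_mem hx]
  exact indicator_of_notMem ((hP hji).notMem_of_mem_right hx) _

lemma constOnParts_partitionAverage (hP : Pairwise (Disjoint on P)) :
    ConstOnParts P (partitionAverage μ P u) := fun i =>
  ⟨⨍ a in P i, u a ∂μ, fun _ hx => partitionAverage_eq_of_mem hP hx⟩

namespace IsMeasurablePartition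

lemma integral_eq_sum (hP : IsMeasurablePartition P) (hu : Integrable u μ) :
    ∫ x, u x ∂μ = ∑ i, ∫ x in P i, u x ∂μ := by
  rw [← setIntegral_univ, ← hP.iUnion_eq_univ,
    integral_iUnion_fintype hP.measurableSet hP.pairwise_disjoint fun _ => hu.integrableOn]

variable [IsFiniteMeasure μ]

lemma integrable_partitionAverage (hP : IsMeasurablePartition P) :
    Integrable (partitionAverage μ P u) μ :=
  (constOnParts_partitionAverage hP.pairwise_disjoint).integrable hP

lemma setIntegral_partitionAverage (hP : IsMeasurablePartition P) (i : ι) :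
    ∫ x in P i, partitionAverage μ P u x ∂μ = ∫ x in P i, u x ∂μ := by
  rw [setIntegral_congr_fun (hP.measurableSet i)
      fun x hx => partitionAverage_eq_of_mem hP.pairwise_disjoint hx,
    setIntegral_const, measure_smul_setAverage _ (measure_ne_top _ _)]

lemma integral_partitionAverage_mul (hP : IsMeasurablePartition P) (hu : Integrable u μ)
    (hg : ConstOnParts P g) :
    ∫ x, partitionAverage μ P u x * g x ∂μ = ∫ x, u x * g x ∂μ := by
  have hgu := hg.integrable_mul hP hu
  have hgE := hg.integrable_mul hP (hP.integrable_partitionAverage (μ := μ) (u := u))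
  choose c hc using hg
  have split (v : α → ℝ) (hv : Integrable (fun x => v x * g x) μ) :
      ∫ x, v x * g x ∂μ = ∑ i, (∫ x in P i, v x ∂μ) * c i := by
    rw [hP.integral_eq_sum hv]
    refine Finset.sum_congr rfl fun i _ => ?_
    rw [← integral_mul_const]
    exact setIntegral_congr_fun (hP.measurableSet i) fun x hx => by simp only [hc i x hx]
  rw [split _ hgE, split u hgu]
  simp only [hP.setIntegral_partitionAverage]

end IsMeasurablePartition

end partitionAverage

lemma sq_integral_le_integral_sq [MeasurableSpace α] {μ : Measure α} [IsProbabilityMeasure μ]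
    {v : α → ℝ} (hv : Integrable v μ) (hv2 : Integrable (fun x => v x ^ 2) μ) :
    (∫ x, v x ∂μ) ^ 2 ≤ ∫ x, v x ^ 2 ∂μ :=
  (even_two.convexOn_pow).map_integral_le (continuous_pow 2).continuousOn isClosed_univ
    (ae_of_all _ fun _ => mem_univ _) hv hv2

namespace IsMeasurablePartition

variable [MeasurableSpace α] [Fintype ι] [Fintype κ] {μ : Measure α} {P : ι → Set α}
  {Q : κ → Set α} {u g : α → ℝ}

lemma abs_partitionAverage_le [IsFiniteMeasure μ] (hP : IsMeasurablePartition P) {M : ℝ}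
    (hM : 0 ≤ M) (hu : Integrable u μ) (huM : ∀ᵐ x ∂μ, |u x| ≤ M) (x : α) :
    |partitionAverage μ P u x| ≤ M := by
  obtain ⟨i, hi⟩ := hP.exists_mem x
  rw [partitionAverage_eq_of_mem hP.pairwise_disjoint hi, abs_le, ← mem_Icc]
  by_cases h0 : μ (P i) = 0
  · simp [setAverage_eq, measureReal_def, h0, hM]
  exact (convex_Icc _ _).set_average_mem isClosed_Icc h0 (measure_ne_top _ _)
    (ae_restrict_of_ae (huM.mono fun _ h => abs_le.1 h)) hu.integrableOn

variable [IsFiniteMeasure μ]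

lemma integral_sq_sub_partitionAverage (hP : IsMeasurablePartition P)
    (hQ : IsMeasurablePartition Q) (hQP : Refines Q P) (hu : Integrable u μ) :
    ∫ x, (partitionAverage μ Q u x - partitionAverage μ P u x) ^ 2 ∂μ =
      ∫ x, partitionAverage μ Q u x ^ 2 ∂μ - ∫ x, partitionAverage μ P u x ^ 2 ∂μ := by
  set E' := partitionAverage μ Q u
  set E := partitionAverage μ P u
  have hE : ConstOnParts P E := constOnParts_partitionAverage hP.pairwise_disjoint
  have hE' : ConstOnParts Q E' := constOnParts_partitionAverage hQ.pairwise_disjoint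
  have hEQ : ConstOnParts Q E := hE.of_refines hQP
  have cross : ∫ x, E' x * E x ∂μ = ∫ x, E x * E x ∂μ :=
    (hQ.integral_partitionAverage_mul hu hEQ).trans (hP.integral_partitionAverage_mul hu hE).symm
  have i1 : Integrable (fun x => E' x ^ 2) μ := (hE'.comp₂ hE' fun a _ => a ^ 2).integrable hQ
  have i2 : Integrable (fun x => E x ^ 2) μ := (hE.comp₂ hE fun a _ => a ^ 2).integrable hP
  have i3 : Integrable (fun x => E' x * E x) μ := (hE'.comp₂ hEQ (· * ·)).integrable hQ
  have i4 : Integrable (fun x => E x * E x) μ := (hE.comp₂ hE (· * ·)).integrable hP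
  calc ∫ x, (E' x - E x) ^ 2 ∂μ
      = ∫ x, (E' x ^ 2 - E x ^ 2 - 2 * (E' x * E x - E x * E x)) ∂μ := by
        congr 1; ext x; ring
    _ = ∫ x, E' x ^ 2 ∂μ - ∫ x, E x ^ 2 ∂μ := by
        have i12 : Integrable (fun x => E' x ^ 2 - E x ^ 2) μ := i1.sub i2
        have i34 : Integrable (fun x => 2 * (E' x * E x - E x * E x)) μ := (i3.sub i4).const_mul 2
        rw [integral_sub i12 i34, integral_sub i1 i2,
          integral_const_mul, integral_sub i3 i4, cross, sub_self, mul_zero, sub_zero]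

lemma sq_integral_sub_partitionAverage_mul_le [IsProbabilityMeasure μ]
    (hP : IsMeasurablePartition P) (hQ : IsMeasurablePartition Q) (hQP : Refines Q P)
    (hu : Integrable u μ) (hg : ConstOnParts Q g) (hg1 : ∀ x, |g x| ≤ 1) :
    (∫ x, (u x - partitionAverage μ P u x) * g x ∂μ) ^ 2 ≤
      ∫ x, (partitionAverage μ Q u x - partitionAverage μ P u x) ^ 2 ∂μ := by
  set E' := partitionAverage μ Q u
  set E := partitionAverage μ P u
  have hE : ConstOnParts Q E := (constOnParts_partitionAverage hP.pairwise_disjoint).of_refines hQP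
  have hE' : ConstOnParts Q E' := constOnParts_partitionAverage hQ.pairwise_disjoint
  have hD : ConstOnParts Q fun x => (E' x - E x) * g x :=
    (hE'.comp₂ hE (· - ·)).comp₂ hg (· * ·)
  have hEg : Integrable (fun x => E x * g x) μ := (hE.comp₂ hg (· * ·)).integrable hQ
  have hE'g : Integrable (fun x => E' x * g x) μ := (hE'.comp₂ hg (· * ·)).integrable hQ
  have proj : ∫ x, (u x - E x) * g x ∂μ = ∫ x, (E' x - E x) * g x ∂μ := by
    simp only [sub_mul]
    rw [integral_sub (hg.integrable_mul hQ hu) hEg, integral_sub hE'g hEg,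
      hQ.integral_partitionAverage_mul hu hg]
  have hD2 := (hD.comp₂ hD fun a _ => a ^ 2).integrable (μ := μ) hQ
  rw [proj]
  calc (∫ x, (E' x - E x) * g x ∂μ) ^ 2 ≤ ∫ x, ((E' x - E x) * g x) ^ 2 ∂μ :=
        sq_integral_le_integral_sq (hD.integrable hQ) hD2
    _ ≤ ∫ x, (E' x - E x) ^ 2 ∂μ :=
        integral_mono hD2 (((hE'.comp₂ hE (· - ·)).comp₂ hE fun a _ => a ^ 2).integrable hQ)
          fun x => by
            have : g x ^ 2 ≤ 1 := by nlinarith [abs_le.1 (hg1 x), sq_abs (g x)]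
            nlinarith [sq_nonneg (E' x - E x), mul_pow (E' x - E x) (g x) 2]

end IsMeasurablePartition

def cutRefine (P : ι → Set α) (S S' : Set α) : ι × (Bool × Bool) → Set α :=
  partitionInter P fun b => (fun x => (S.boolIndicator x, S'.boolIndicator x)) ⁻¹' {b}

lemma constOnParts_indicator_cutRefine (P : ι → Set α) (S S' : Set α) :
    ConstOnParts (partitionProd (cutRefine P S S') (cutRefine P S S'))
      ((S ×ˢ S').indicator 1) := by
  rintro ⟨⟨i, b⟩, ⟨j, b'⟩⟩
  refine ⟨if b.1 = true ∧ b'.2 = true then 1 else 0, fun q hq => ?_⟩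
  obtain ⟨⟨-, hq₁⟩, ⟨-, hq₂⟩⟩ := hq
  simp only [mem_preimage, mem_singleton_iff] at hq₁ hq₂
  classical
  simp only [indicator_apply, mem_prod, mem_iff_boolIndicator S, mem_iff_boolIndicator S', ← hq₁,
    ← hq₂, Pi.one_apply]

section CutNorm

variable [MeasurableSpace α] {μ : Measure α} {f : α × α → ℝ} {M : ℝ}

noncomputable def kernelEnergy [Fintype ι] (μ : Measure α) (P : ι → Set α) (f : α × α → ℝ) :
    ℝ :=
  ∫ q, partitionAverage (μ.prod μ) (partitionProd P P) f q ^ 2 ∂μ.prod μ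

def IsCutRegular [Fintype ι] (μ : Measure α) (ε : ℝ) (P : ι → Set α) (f : α × α → ℝ) : Prop :=
  ∀ S S', MeasurableSet S → MeasurableSet S' →
    |∫ q in S ×ˢ S', (f q - partitionAverage (μ.prod μ) (partitionProd P P) f q) ∂μ.prod μ| ≤ ε

lemma isMeasurablePartition_cutRefine {P : ι → Set α} (hP : IsMeasurablePartition P)
    {S S' : Set α} (hS : MeasurableSet S) (hS' : MeasurableSet S') :
    IsMeasurablePartition (cutRefine P S S') :=
  hP.inter (.preimage ((measurable_to_bool (by rwa [preimage_boolIndicator_true])).prodMk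
    (measurable_to_bool (by rwa [preimage_boolIndicator_true]))))

lemma kernelEnergy_nonneg [Fintype ι] (P : ι → Set α) : 0 ≤ kernelEnergy μ P f :=
  integral_nonneg fun _ => sq_nonneg _

variable [IsProbabilityMeasure μ]

lemma IsMeasurablePartition.kernelEnergy_le [Fintype ι] {P : ι → Set α}
    (hP : IsMeasurablePartition P)
    (hf : Integrable f (μ.prod μ)) (hM : 0 ≤ M) (hfM : ∀ᵐ q ∂μ.prod μ, |f q| ≤ M) :
    kernelEnergy μ P f ≤ M ^ 2 := by
  have hPP := hP.prod hP
  have hE := constOnParts_partitionAverage (μ := μ.prod μ) (u := f) hPP.pairwise_disjoint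
  calc kernelEnergy μ P f ≤ ∫ _, M ^ 2 ∂μ.prod μ :=
        integral_mono ((hE.comp₂ hE fun a _ => a ^ 2).integrable hPP) (integrable_const _)
          fun q => by simpa [sq_abs] using
            pow_le_pow_left₀ (abs_nonneg _) (hPP.abs_partitionAverage_le hM hf hfM q) 2
    _ = M ^ 2 := by simp

lemma IsMeasurablePartition.sq_setIntegral_sub_le_kernelEnergy_cutRefine [Fintype ι]
    {P : ι → Set α}
    (hP : IsMeasurablePartition P) (hf : Integrable f (μ.prod μ)) {S S' : Set α}
    (hS : MeasurableSet S) (hS' : MeasurableSet S') :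
    (∫ q in S ×ˢ S', (f q - partitionAverage (μ.prod μ) (partitionProd P P) f q) ∂μ.prod μ) ^ 2
      ≤ kernelEnergy μ (cutRefine P S S') f - kernelEnergy μ P f := by
  have hR := isMeasurablePartition_cutRefine hP hS hS'
  have hRP : Refines (cutRefine P S S') P := refines_partitionInter_left _ _
  rw [kernelEnergy, kernelEnergy, ← (hP.prod hP).integral_sq_sub_partitionAverage (hR.prod hR)
    hRP.partitionProd hf, ← integral_indicator (hS.prod hS')]
  convert (hP.prod hP).sq_integral_sub_partitionAverage_mul_le (hR.prod hR) hRP.partitionProd hf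
    (constOnParts_indicator_cutRefine P S S') fun q => ?_ using 4 with q
  · by_cases hq : q ∈ S ×ˢ S' <;> simp [hq]
  · by_cases hq : q ∈ S ×ˢ S' <;> simp [hq]

lemma IsMeasurablePartition.exists_refines_isCutRegular_of_lt
    (hf : Integrable f (μ.prod μ)) (hM : 0 ≤ M) (hfM : ∀ᵐ q ∂μ.prod μ, |f q| ≤ M) {ε : ℝ}
    (hε : 0 ≤ ε) (n : ℕ) {ι : Type u} [Fintype ι] {P : ι → Set α}
    (hP : IsMeasurablePartition P) (hn : M ^ 2 < kernelEnergy μ P f + n * ε ^ 2) :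
    ∃ (κ : Type u) (_ : Fintype κ) (Q : κ → Set α), IsMeasurablePartition Q ∧ Refines Q P ∧
      Fintype.card κ ≤ 4 ^ n * Fintype.card ι ∧ IsCutRegular μ ε Q f := by
  induction n generalizing ι with
  | zero =>
    simp only [CharP.cast_eq_zero, zero_mul, add_zero] at hn
    exact absurd hn (hP.kernelEnergy_le hf hM hfM).not_gt
  | succ n ih =>
    by_cases hreg : IsCutRegular μ ε P f
    · exact ⟨ι, _, P, hP, refines_refl P,
        Nat.le_mul_of_pos_left _ (by positivity), hreg⟩
    obtain ⟨S, S', hS, hS', hlt⟩ : ∃ S S', MeasurableSet S ∧ MeasurableSet S' ∧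
        ε < |∫ q in S ×ˢ S', (f q - partitionAverage (μ.prod μ) (partitionProd P P) f q)
          ∂μ.prod μ| := by
      simpa [IsCutRegular] using hreg
    have hinc := hP.sq_setIntegral_sub_le_kernelEnergy_cutRefine hf hS hS'
    have hsq := sq_lt_sq' (by linarith [abs_nonneg ε, le_abs_self ε]) hlt
    rw [sq_abs] at hsq
    obtain ⟨κ, _, Q, hQ, hQR, hcard, hQreg⟩ :=
      ih (isMeasurablePartition_cutRefine hP hS hS') (by push_cast at hn; nlinarith)
    refine ⟨κ, _, Q, hQ, hQR.trans (refines_partitionInter_left _ _), ?_, hQreg⟩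
    simp only [Fintype.card_prod, Fintype.card_bool] at hcard
    exact hcard.trans_eq (by ring)

theorem IsMeasurablePartition.exists_refines_isCutRegular {ι : Type u} [Fintype ι]
    {P : ι → Set α} (hP : IsMeasurablePartition P) (hf : Integrable f (μ.prod μ)) (hM : 0 ≤ M)
    (hfM : ∀ᵐ q ∂μ.prod μ, |f q| ≤ M) {ε : ℝ} (hε : 0 < ε) :
    ∃ (κ : Type u) (_ : Fintype κ) (Q : κ → Set α), IsMeasurablePartition Q ∧ Refines Q P ∧
      Fintype.card κ ≤ 4 ^ (⌊M ^ 2 / ε ^ 2⌋₊ + 1) * Fintype.card ι ∧ IsCutRegular μ ε Q f :=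
  hP.exists_refines_isCutRegular_of_lt hf hM hfM hε.le _ <| by
    have h := Nat.lt_floor_add_one (M ^ 2 / ε ^ 2)
    rw [div_lt_iff₀ (by positivity)] at h
    push_cast
    linarith [kernelEnergy_nonneg (μ := μ) (f := f) P]

end CutNorm

noncomputable def levelIndex (δ : ℝ) (N : ℕ) (t : ℝ) : Fin (N + 1) :=
  ⟨min ⌊t / δ⌋₊ N, Nat.lt_succ_of_le (min_le_right _ _)⟩

lemma measurable_levelIndex (δ : ℝ) (N : ℕ) : Measurable (levelIndex δ N) :=
  (measurable_from_nat (f := fun k => (⟨min k N, Nat.lt_succ_of_le (min_le_right _ _)⟩ :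
    Fin (N + 1)))).comp (measurable_id.div_const δ).nat_floor

lemma mem_Icc_levelIndex {δ B t : ℝ} (hδ : 0 < δ) (ht : t ∈ Icc 0 B) :
    t ∈ Icc ((levelIndex δ ⌊B / δ⌋₊ t : ℕ) * δ) ((levelIndex δ ⌊B / δ⌋₊ t : ℕ) * δ + δ) := by
  have hk : ((levelIndex δ ⌊B / δ⌋₊ t : ℕ) : ℝ) = ⌊t / δ⌋₊ := by
    simp only [levelIndex]
    rw [min_eq_left (Nat.floor_le_floor (div_le_div_of_nonneg_right ht.2 hδ.le))]
  rw [hk]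
  have h₁ := Nat.floor_le (div_nonneg ht.1 hδ.le)
  have h₂ := Nat.lt_floor_add_one (t / δ)
  rw [le_div_iff₀ hδ] at h₁
  rw [div_lt_iff₀ hδ] at h₂
  exact ⟨h₁, by linarith⟩

section Oscillation

variable [MeasurableSpace α] {μ : Measure α} {P : ι → Set α} {u : α → ℝ} {δ : ℝ}

def OscillationLE (μ : Measure α) (δ : ℝ) (P : ι → Set α) (u : α → ℝ) : Prop :=
  ∀ i, ∃ c, ∀ᵐ x ∂μ.restrict (P i), u x ∈ Icc c (c + δ)

lemma OscillationLE.of_refines {Q : κ → Set α} (h : OscillationLE μ δ P u)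
    (hQP : Refines Q P) : OscillationLE μ δ Q u := fun j =>
  let ⟨i, hi⟩ := hQP j
  let ⟨c, hc⟩ := h i
  ⟨c, ae_restrict_of_ae_restrict_of_subset hi hc⟩

lemma oscillationLE_preimage [MeasurableSpace κ] [MeasurableSingletonClass κ] {φ : α → κ}
    (hφ : Measurable φ) (c : κ → ℝ) (h : ∀ᵐ x ∂μ, u x ∈ Icc (c (φ x)) (c (φ x) + δ)) :
    OscillationLE μ δ (fun k => φ ⁻¹' {k}) u := fun k =>
  ⟨c k, (ae_restrict_iff' (hφ (measurableSet_singleton k))).2 <| h.mono fun x hx hxk => by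
    rwa [← show φ x = k from hxk]⟩

lemma exists_levelPartition {u : α → ℝ} (hu : Measurable u) {B : ℝ} (hδ : 0 < δ)
    (huB : ∀ᵐ x ∂μ, u x ∈ Icc 0 B) : ∃ P : Fin (⌊B / δ⌋₊ + 1) → Set α,
      IsMeasurablePartition P ∧ OscillationLE μ δ P u :=
  ⟨_, .preimage ((measurable_levelIndex δ _).comp hu), oscillationLE_preimage
    ((measurable_levelIndex δ _).comp hu) (fun k => k * δ)
    (huB.mono fun _ hx => mem_Icc_levelIndex hδ hx)⟩

lemma IsMeasurablePartition.integral_abs_sub_partitionAverage_le [Fintype ι] [IsFiniteMeasure μ]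
    (hP : IsMeasurablePartition P) (hu : Integrable u μ) (hosc : OscillationLE μ δ P u) :
    ∫ x, |u x - partitionAverage μ P u x| ∂μ ≤ δ * μ.real univ := by
  have hd : Integrable (fun x => |u x - partitionAverage μ P u x|) μ :=
    (hu.sub hP.integrable_partitionAverage).abs
  rw [hP.integral_eq_sum hd, ← hP.iUnion_eq_univ,
    measureReal_iUnion_fintype hP.pairwise_disjoint hP.measurableSet, Finset.mul_sum]
  refine Finset.sum_le_sum fun i _ => ?_
  obtain ⟨c, hc⟩ := hosc i
  have hae : ∀ᵐ x ∂μ.restrict (P i), |u x - partitionAverage μ P u x| ≤ δ := by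
    rcases eq_or_ne (μ (P i)) 0 with h0 | h0
    · simp [Measure.restrict_eq_zero.2 h0]
    have havg := (convex_Icc c (c + δ)).set_average_mem isClosed_Icc h0 (measure_ne_top _ _) hc
      hu.integrableOn
    filter_upwards [hc, ae_restrict_mem (hP.measurableSet i)] with x hx hxi
    rw [partitionAverage_eq_of_mem hP.pairwise_disjoint hxi, abs_le]
    constructor <;> linarith [hx.1, hx.2, havg.1, havg.2]
  calc ∫ x in P i, |u x - partitionAverage μ P u x| ∂μ ≤ ∫ _ in P i, δ ∂μ :=
        integral_mono_ae hd.integrableOn (integrable_const δ) hae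
    _ = δ * μ.real (P i) := by rw [setIntegral_const, smul_eq_mul, mul_comm]

end Oscillation

section Matching

variable [MeasurableSpace α] {μ : Measure α}

def AEMatch (μ : Measure α) (I : ι → Set α) (P : κ → Set α) : Prop :=
  ∀ᵐ x ∂μ, ∃ i j, x ∈ I i ∧ x ∈ P j ∧ I i =ᵐ[μ] P j

lemma AEMatch.partitionAverage_ae_eq [Fintype ι] [Fintype κ] {I : ι → Set α} {P : κ → Set α}
    (h : AEMatch μ I P) (hI : Pairwise (Disjoint on I)) (hP : Pairwise (Disjoint on P))
    (u : α → ℝ) : partitionAverage μ I u =ᵐ[μ] partitionAverage μ P u :=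
  h.mono fun _ ⟨_, _, hi, hj, hij⟩ => by
    rw [partitionAverage_eq_of_mem hI hi, partitionAverage_eq_of_mem hP hj, setAverage_congr hij]

lemma AEMatch.prod [SFinite μ] {I : ι → Set α} {P : κ → Set α} (h : AEMatch μ I P) :
    AEMatch (μ.prod μ) (partitionProd I I) (partitionProd P P) := by
  filter_upwards [Measure.quasiMeasurePreserving_fst.ae h, Measure.quasiMeasurePreserving_snd.ae h]
    with q ⟨i, j, hi, hj, hij⟩ ⟨i', j', hi', hj', hij'⟩
  refine ⟨(i, i'), (j, j'), ⟨hi, hi'⟩, ⟨hj, hj'⟩, ?_⟩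
  simp only [partitionProd, prod_eq]
  exact (Measure.quasiMeasurePreserving_fst.preimage_ae_eq hij).inter
    (Measure.quasiMeasurePreserving_snd.preimage_ae_eq hij')

lemma IsMeasurablePartition.exists_measure_ne_zero [Countable ι] [NeZero μ] {P : ι → Set α}
    (hP : IsMeasurablePartition P) : ∃ i, μ (P i) ≠ 0 := by
  by_contra! h
  refine NeZero.ne μ (Measure.measure_univ_eq_zero.1 ?_)
  rw [← hP.iUnion_eq_univ]
  exact measure_iUnion_null h

def coarsen (P : κ → Set α) (r : κ → ι) (i : ι) : Set α := ⋃ (j) (_ : r j = i), P j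

lemma IsMeasurablePartition.mem_coarsen_iff {P : κ → Set α} (hP : IsMeasurablePartition P)
    {r : κ → ι} {x : α} {j : κ} (hx : x ∈ P j) {i : ι} : x ∈ coarsen P r i ↔ r j = i := by
  simp only [coarsen, mem_iUnion, exists_prop]
  exact ⟨fun ⟨j', hj', hx'⟩ => hP.eq_of_mem hx hx' ▸ hj', fun h => ⟨j, h, hx⟩⟩

lemma isMeasurablePartition_coarsen [Countable κ] {P : κ → Set α}
    (hP : IsMeasurablePartition P) (r : κ → ι) : IsMeasurablePartition (coarsen P r) where
  measurableSet _ := .iUnion fun j => .iUnion fun _ => hP.measurableSet j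
  pairwise_disjoint i i' h := disjoint_left.2 fun x hx hx' => h <| by
    obtain ⟨j, hj⟩ := hP.exists_mem x
    exact ((hP.mem_coarsen_iff hj).1 hx).symm.trans ((hP.mem_coarsen_iff hj).1 hx')
  iUnion_eq_univ := eq_univ_of_forall fun x =>
    let ⟨_, hj⟩ := hP.exists_mem x
    mem_iUnion.2 ⟨_, (hP.mem_coarsen_iff hj).2 rfl⟩

/-- The null parts of `P` are merged into one part of positive measure, and every part is cut down
to `s`. -/
lemma IsMeasurablePartition.exists_aeMatch [Fintype κ] [NeZero μ] {P : κ → Set α}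
    (hP : IsMeasurablePartition P) {s : Set α} (hs : MeasurableSet s) (hsc : μ sᶜ = 0) :
    ∃ (K : ℕ) (I : Fin K → Set α), (∀ k, MeasurableSet (I k)) ∧ Pairwise (Disjoint on I) ∧
      (⋃ k, I k) = s ∧ (∀ k, μ (I k) ≠ 0) ∧ 0 < K ∧ K ≤ Fintype.card κ ∧ AEMatch μ I P := by
  classical
  let pos := {j // μ (P j) ≠ 0}
  obtain ⟨j, hj⟩ := hP.exists_measure_ne_zero (μ := μ)
  let j₀ : pos := ⟨j, hj⟩
  let r : κ → pos := fun j => if h : μ (P j) ≠ 0 then ⟨j, h⟩ else j₀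
  have hC := isMeasurablePartition_coarsen hP r
  let I : pos → Set α := fun p => s ∩ coarsen P r p
  have hN : μ (⋃ (j) (_ : μ (P j) = 0), P j) = 0 := measure_iUnion_null fun j =>
    measure_iUnion_null id
  have hIP (p : pos) : I p =ᵐ[μ] P p := by
    refine ae_eq_set.2 ⟨measure_mono_null (fun x ⟨⟨_, hxr⟩, hxP⟩ => ?_) hN,
      measure_mono_null (fun x ⟨hxP, hxI⟩ => fun hxs =>
        hxI ⟨hxs, (hP.mem_coarsen_iff hxP).2 (show r p = p from dif_pos p.2)⟩) hsc⟩
    obtain ⟨j, hj⟩ := hP.exists_mem x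
    refine mem_iUnion₂.2 ⟨j, by_contra fun h0 => hxP ?_, hj⟩
    rw [← (hP.mem_coarsen_iff hj).1 hxr, show r j = ⟨j, h0⟩ from dif_pos h0]
    exact hj
  let e := (Fintype.equivFin pos).symm
  refine ⟨Fintype.card pos, I ∘ e, fun k => hs.inter (hC.measurableSet _),
    fun k k' h => (hC.pairwise_disjoint (e.injective.ne h)).mono inter_subset_right
      inter_subset_right, ?_, fun k => ?_, Fintype.card_pos_iff.2 ⟨j₀⟩,
    Fintype.card_subtype_le _, ?_⟩
  · change ⋃ k, s ∩ coarsen P r (e k) = s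
    rw [← inter_iUnion, e.surjective.iUnion_comp (coarsen P r), hC.iUnion_eq_univ, inter_univ]
  · simpa [measure_congr (hIP (e k))] using (e k).2
  · filter_upwards [measure_eq_zero_iff_ae_notMem.1 hN, measure_eq_zero_iff_ae_notMem.1 hsc]
      with x hxN hxs
    obtain ⟨j, hj⟩ := hP.exists_mem x
    have h0 : μ (P j) ≠ 0 := fun h0 => hxN (mem_iUnion₂.2 ⟨j, h0, hj⟩)
    refine ⟨e.symm ⟨j, h0⟩, j, ?_, hj, by simpa using hIP ⟨j, h0⟩⟩
    change x ∈ I (e (e.symm ⟨j, h0⟩))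
    rw [Equiv.apply_symm_apply]
    exact ⟨not_not.1 hxs, (hP.mem_coarsen_iff hj).2 (dif_pos h0)⟩

end Matching

lemma setIntegral_prod_restrict_of_subset [MeasurableSpace α] {ν : Measure α} [SFinite ν]
    {s A B : Set α} (hA : A ⊆ s) (hB : B ⊆ s) {f : α × α → ℝ}
    (hf : IntegrableOn f (A ×ˢ B) ((ν.restrict s).prod (ν.restrict s))) :
    ∫ q in A ×ˢ B, f q ∂(ν.restrict s).prod (ν.restrict s) =
      ∫ a in A, ∫ b in B, f (a, b) ∂ν ∂ν := by
  rw [IntegrableOn, ← Measure.prod_restrict, Measure.restrict_restrict_of_subset hA,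
    Measure.restrict_restrict_of_subset hB] at hf
  rw [← Measure.prod_restrict, Measure.restrict_restrict_of_subset hA,
    Measure.restrict_restrict_of_subset hB, integral_prod _ hf]

section UnitInterval

local notation "μ₀" => volume.restrict (Icc (0 : ℝ) 1)

instance : IsProbabilityMeasure μ₀ := ⟨by simp⟩

lemma setAverage_unitInterval {A : Set ℝ} (hA : A ⊆ Icc 0 1) (u : ℝ → ℝ) :
    ⨍ a in A, u a ∂μ₀ = (∫ a in A, u a) / (volume A).toReal := by
  rw [setAverage_eq, Measure.restrict_restrict_of_subset hA, measureReal_def,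
    Measure.restrict_apply' measurableSet_Icc, inter_eq_left.2 hA, smul_eq_mul, inv_mul_eq_div]

variable {ι : Type*} [Fintype ι] {I : ι → Set ℝ}

lemma sum_indicator_eq_partitionAverage (hI : ∀ i, I i ⊆ Icc 0 1) (u : ℝ → ℝ) (x : ℝ) :
    ∑ i, (I i).indicator (fun _ => (∫ a in I i, u a) / (volume (I i)).toReal) x =
      partitionAverage μ₀ I u x := by
  simp only [partitionAverage, setAverage_unitInterval (hI _)]

lemma sum_sum_indicator_eq_partitionAverage (hI : ∀ i, I i ⊆ Icc 0 1) {W : ℝ → ℝ → ℝ}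
    (hW : Integrable (uncurry W) (Measure.prod μ₀ μ₀)) (x y : ℝ) :
    ∑ k, ∑ l, (I k).indicator 1 x * (I l).indicator 1 y *
        ((∫ a in I k, ∫ b in I l, W a b) / ((volume (I k)).toReal * (volume (I l)).toReal)) =
      partitionAverage (Measure.prod μ₀ μ₀) (partitionProd I I) (uncurry W) (x, y) := by
  rw [partitionAverage, Fintype.sum_prod_type]
  refine Finset.sum_congr rfl fun k _ => Finset.sum_congr rfl fun l _ => ?_
  dsimp only [partitionProd]
  rw [setAverage_eq, setIntegral_prod_restrict_of_subset (hI k) (hI l) hW.integrableOn,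
    measureReal_prod_prod, measureReal_def, measureReal_def,
    Measure.restrict_apply' measurableSet_Icc, Measure.restrict_apply' measurableSet_Icc,
    inter_eq_left.2 (hI k), inter_eq_left.2 (hI l), smul_eq_mul, inv_mul_eq_div]
  by_cases hx : x ∈ I k <;> by_cases hy : y ∈ I l <;> simp [hx, hy]

variable {κ : Type*} [Fintype κ] {P : κ → Set ℝ}

lemma cutNorm_sub_sum_sum_indicator_le (hP : IsMeasurablePartition P)
    (hId : Pairwise (Disjoint on I)) (hI : ∀ i, I i ⊆ Icc 0 1) (hIP : AEMatch μ₀ I P)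
    {W : ℝ → ℝ → ℝ} (hW : Integrable (uncurry W) (Measure.prod μ₀ μ₀)) {ε : ℝ} (hε : 0 ≤ ε)
    (hreg : IsCutRegular μ₀ ε P (uncurry W)) :
    cutNorm (fun x y => W x y - ∑ k, ∑ l, (I k).indicator 1 x * (I l).indicator 1 y *
      ((∫ a in I k, ∫ b in I l, W a b) / ((volume (I k)).toReal * (volume (I l)).toReal))) ≤ ε := by
  refine Real.sSup_le ?_ hε
  rintro r ⟨S, S', hS, hS', hS₁, hS'₁, rfl⟩
  have hE := hIP.prod.partitionAverage_ae_eq (pairwise_disjoint_partitionProd hId hId)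
    (hP.prod hP).pairwise_disjoint (uncurry W)
  have hint : Integrable (fun q => uncurry W q -
      partitionAverage (Measure.prod μ₀ μ₀) (partitionProd I I) (uncurry W) q)
      (Measure.prod μ₀ μ₀) :=
    hW.sub ((hP.prod hP).integrable_partitionAverage.congr hE.symm)
  have hprod := setIntegral_prod_restrict_of_subset hS₁ hS'₁ hint.integrableOn
  simp only [uncurry_apply_pair] at hprod
  simp only [sum_sum_indicator_eq_partitionAverage hI hW]
  rw [← hprod, setIntegral_congr_ae (hS.prod hS') (hE.mono fun q hq _ => by rw [hq])]
  exact hreg S S' hS hS'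

lemma integral_abs_sub_sum_indicator_le (hP : IsMeasurablePartition P)
    (hId : Pairwise (Disjoint on I)) (hI : ∀ i, I i ⊆ Icc 0 1) (hIP : AEMatch μ₀ I P)
    {u : ℝ → ℝ} (hu : Integrable u μ₀) {δ : ℝ} (hosc : OscillationLE μ₀ δ P u) :
    ∫ x in Icc 0 1, |u x - ∑ k, (I k).indicator
      (fun _ => (∫ a in I k, u a) / (volume (I k)).toReal) x| ≤ δ := by
  simp only [sum_indicator_eq_partitionAverage hI]
  rw [integral_congr_ae ((hIP.partitionAverage_ae_eq hId hP.pairwise_disjoint u).mono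
    fun x hx => by rw [hx])]
  simpa using hP.integral_abs_sub_partitionAverage_le hu hosc

end UnitInterval

theorem stmt_16_general (m M : ℝ) (hm : 0 < m) (hmM : m ≤ M) :
    ∀ ε > (0 : ℝ), ∃ Kmax : ℕ,
      ∀ (W : ℝ → ℝ → ℝ) (u₀ γ : ℝ → ℝ),
        Measurable (Function.uncurry W) → Measurable u₀ → Measurable γ →
        (∀ᵐ q ∂(volume.restrict (Set.Icc (0 : ℝ) 1 ×ˢ Set.Icc (0 : ℝ) 1)),
          m ≤ W q.1 q.2 ∧ W q.1 q.2 = W q.2 q.1 ∧ W q.1 q.2 ≤ M) →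
        (∀ᵐ x ∂(volume.restrict (Set.Icc (0 : ℝ) 1)), m ≤ u₀ x ∧ u₀ x ≤ 1 - m) →
        (∀ᵐ x ∂(volume.restrict (Set.Icc (0 : ℝ) 1)), 0 ≤ γ x ∧ γ x ≤ M) →
        ∃ K : ℕ, 0 < K ∧ K ≤ Kmax ∧
          ∃ I : Fin K → Set ℝ,
            (∀ k, MeasurableSet (I k)) ∧ (∀ k, 0 < volume (I k)) ∧
            Pairwise (Function.onFun Disjoint I) ∧
            (⋃ k, I k) = Set.Icc (0 : ℝ) 1 ∧
            cutNorm (fun x y => W x y -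
                ∑ k : Fin K, ∑ l : Fin K,
                  (I k).indicator 1 x * (I l).indicator 1 y *
                    ((∫ a in I k, ∫ b in I l, W a b) /
                      ((volume (I k)).toReal * (volume (I l)).toReal))) +
              (∫ x in Set.Icc (0 : ℝ) 1, |u₀ x -
                ∑ k : Fin K, (I k).indicator
                  (fun _ => (∫ a in I k, u₀ a) / (volume (I k)).toReal) x|) +
              (∫ x in Set.Icc (0 : ℝ) 1, |γ x -
                ∑ k : Fin K, (I k).indicator
                  (fun _ => (∫ a in I k, γ a) / (volume (I k)).toReal) x|) < ε := by
  intro ε hε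
  set δ := ε / 4 with hδε
  have hδ : 0 < δ := by positivity
  refine ⟨4 ^ (⌊M ^ 2 / δ ^ 2⌋₊ + 1) * ((⌊1 / δ⌋₊ + 1) * (⌊M / δ⌋₊ + 1)), ?_⟩
  intro W u₀ γ hWm hum hγm hW hu hγ
  rw [Measure.volume_eq_prod, ← Measure.prod_restrict] at hW
  have hWM := hW.mono fun q hq => abs_le.2 ⟨by linarith [hq.1], hq.2.2⟩
  have hWi := Integrable.of_mem_Icc m M hWm.aemeasurable (hW.mono fun q hq => ⟨hq.1, hq.2.2⟩)
  have hu01 : ∀ᵐ x ∂volume.restrict (Icc (0 : ℝ) 1), u₀ x ∈ Icc 0 1 :=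
    hu.mono fun x hx => ⟨by linarith [hx.1], by linarith [hx.2]⟩
  obtain ⟨Pu, hPu, hoscu⟩ := exists_levelPartition hum hδ hu01
  obtain ⟨Pγ, hPγ, hoscγ⟩ := exists_levelPartition hγm hδ hγ
  obtain ⟨κ, _, P, hP, hPP₀, hcard, hreg⟩ :=
    (hPu.inter hPγ).exists_refines_isCutRegular hWi (hm.le.trans hmM) hWM hδ
  obtain ⟨K, I, hIm, hId, hIU, hIpos, hK, hKcard, hIP⟩ :=
    hP.exists_aeMatch (μ := volume.restrict (Icc 0 1)) measurableSet_Icc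
      (by rw [Measure.restrict_apply measurableSet_Icc.compl, compl_inter_self, measure_empty])
  have hI k : I k ⊆ Icc 0 1 := hIU ▸ subset_iUnion I k
  refine ⟨K, hK, hKcard.trans (hcard.trans_eq (by simp)), I, hIm, fun k => pos_iff_ne_zero.2 ?_,
    hId, hIU, ?_⟩
  · simpa [Measure.restrict_apply' measurableSet_Icc, inter_eq_left.2 (hI k)] using hIpos k
  have hWcut := cutNorm_sub_sum_sum_indicator_le hP hId hI hIP hWi hδ.le hreg
  have hu₀L1 := integral_abs_sub_sum_indicator_le hP hId hI hIP
    (Integrable.of_mem_Icc 0 1 hum.aemeasurable hu01)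
    (hoscu.of_refines (hPP₀.trans (refines_partitionInter_left _ _)))
  have hγL1 := integral_abs_sub_sum_indicator_le hP hId hI hIP
    (Integrable.of_mem_Icc 0 M hγm.aemeasurable hγ)
    (hoscγ.of_refines (hPP₀.trans (refines_partitionInter_right _ _)))
  linarith

/-- Szemerédi's weak regularity lemma for the parameter set `𝒫_{m,M}`
(Lemma `l:Szemeredi`): every triple `(W, u₀, γ)` can be `ε`-approximated in
`‖·‖_□ + L¹ + L¹` by the step-function averages over a measurable partition of
`[0,1]` into at most `K_max(ε)` positive-measure parts. -/
theorem stmt_16 (m M : ℝ) (hm : 0 < m) (hm2 : m ≤ 1 / 2) (hmM : m ≤ M) :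
    ∀ ε > (0 : ℝ), ∃ Kmax : ℕ,
      ∀ (W : ℝ → ℝ → ℝ) (u₀ γ : ℝ → ℝ),
        Measurable (Function.uncurry W) → Measurable u₀ → Measurable γ →
        (∀ᵐ q ∂(volume.restrict (Set.Icc (0 : ℝ) 1 ×ˢ Set.Icc (0 : ℝ) 1)),
          m ≤ W q.1 q.2 ∧ W q.1 q.2 = W q.2 q.1 ∧ W q.1 q.2 ≤ M) →
        (∀ᵐ x ∂(volume.restrict (Set.Icc (0 : ℝ) 1)), m ≤ u₀ x ∧ u₀ x ≤ 1 - m) →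
        (∀ᵐ x ∂(volume.restrict (Set.Icc (0 : ℝ) 1)), 0 ≤ γ x ∧ γ x ≤ M) →
        ∃ K : ℕ, 0 < K ∧ K ≤ Kmax ∧
          ∃ I : Fin K → Set ℝ,
            (∀ k, MeasurableSet (I k)) ∧ (∀ k, 0 < volume (I k)) ∧
            Pairwise (Function.onFun Disjoint I) ∧
            (⋃ k, I k) = Set.Icc (0 : ℝ) 1 ∧
            cutNorm (fun x y => W x y -
                ∑ k : Fin K, ∑ l : Fin K,
                  (I k).indicator 1 x * (I l).indicator 1 y *
                    ((∫ a in I k, ∫ b in I l, W a b) /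
                      ((volume (I k)).toReal * (volume (I l)).toReal))) +
              (∫ x in Set.Icc (0 : ℝ) 1, |u₀ x -
                ∑ k : Fin K, (I k).indicator
                  (fun _ => (∫ a in I k, u₀ a) / (volume (I k)).toReal) x|) +
              (∫ x in Set.Icc (0 : ℝ) 1, |γ x -
                ∑ k : Fin K, (I k).indicator
                  (fun _ => (∫ a in I k, γ a) / (volume (I k)).toReal) x|) < ε :=
  stmt_16_general m M hm hmM
end

section
/- Let 0 < m ≤ 1/2, m ≤ M, T₀ > 0, and let p = (W, z(0), γ, π) be SIS parameters with m ≤ w_{ij} = w_{ji} ≤ M, m ≤ z_i(0) ≤ 1−m, 0 ≤ γ_i ≤ M, π nonnegative with Σ_i π_i = 1, with trajectory z. Let 0 = t₀ < t₁ < ⋯ < t_J = T₀ be measurement points, let z* : [0,T₀] → ℝⁿ be piecewise constant with z*(t) = z*(t_i) for t ∈ [t_i, t_{i+1}), built from measurement values z*(t_i) ∈ ℝⁿ, and define the error terms Δ₁ := ‖z(0) − z*(0)‖_{2,π}, Δ₃ := max_{1 ≤ i ≤ J} (1/(t_i − t_{i−1}))·‖(z(t_i) − z(t_{i−1})) − (z*(t_i)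 − z*(t_{i−1}))‖_{2,π}, Δ₄ := max_{1 ≤ i ≤ J} (t_i − t_{i−1}). Then there is a constant C depending only on m, M, T₀ (not on n or J) such that for all t ∈ [0,T₀]: ‖z(t) − z*(t)‖_{2,π} ≤ C·(Δ₁ + Δ₃ + Δ₄). -/
/-! The error `e = z - z*` is controlled at the measurement points by telescoping: each increment
of `e` over `[t_{i-1}, t_i]` has norm at most `Δ₃ (t_i - t_{i-1})`, so `‖e(t_k)‖ ≤ Δ₁ + Δ₃ T₀`.
Between two measurement points `z*` is frozen while `z` moves with speed at most `M`, since the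
NIMFA vector field is bounded by `M` on `[0,1]ⁿ`; this adds at most `M Δ₄`. Hence `C = 1 + T₀ + M`
works. -/

/-- The `π`-weighted `L²` norm `‖v‖_{2,π} = (Σ_i v_i² π_i)^{1/2}`. -/
noncomputable def pinorm2 {n : ℕ} (pv v : Fin n → ℝ) : ℝ :=
  Real.sqrt (∑ i, (v i) ^ 2 * pv i)

open Set

section PiNorm

variable {n : ℕ} {pv : Fin n → ℝ}

lemma pinorm2_nonneg (pv v : Fin n → ℝ) : 0 ≤ pinorm2 pv v :=
  Real.sqrt_nonneg _

lemma pinorm2_eq_norm (hpv : ∀ i, 0 ≤ pv i) (v : Fin n → ℝ) :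
    pinorm2 pv v = ‖(WithLp.toLp 2 fun i => √(pv i) * v i : EuclideanSpace ℝ (Fin n))‖ := by
  simp [EuclideanSpace.norm_eq, pinorm2, mul_pow, Real.sq_sqrt (hpv _), mul_comm]

lemma pinorm2_add_le (hpv : ∀ i, 0 ≤ pv i) (u v : Fin n → ℝ) :
    pinorm2 pv (u + v) ≤ pinorm2 pv u + pinorm2 pv v := by
  simp only [pinorm2_eq_norm hpv]
  refine (congrArg norm ?_).trans_le (norm_add_le _ _)
  ext i
  simp [mul_add]

lemma pinorm2_le_of_abs_le (hpv : ∀ i, 0 ≤ pv i) (hsum : ∑ i, pv i = 1) {v : Fin n → ℝ}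
    {c : ℝ} (hc : 0 ≤ c) (h : ∀ i, |v i| ≤ c) : pinorm2 pv v ≤ c := by
  refine Real.sqrt_le_iff.2 ⟨hc, ?_⟩
  calc ∑ i, v i ^ 2 * pv i ≤ ∑ i, c ^ 2 * pv i := by
        refine Finset.sum_le_sum fun i _ => mul_le_mul_of_nonneg_right ?_ (hpv i)
        exact sq_le_sq' (abs_le.1 (h i)).1 (abs_le.1 (h i)).2
    _ = c ^ 2 := by rw [← Finset.mul_sum, hsum, mul_one]

lemma pinorm2_le_add_mul_of_increments_le (hpv : ∀ i, 0 ≤ pv i) {J : ℕ}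
    (e : Fin (J + 1) → Fin n → ℝ) (tt : Fin (J + 1) → ℝ) {D : ℝ}
    (h : ∀ i : Fin J, pinorm2 pv (e i.succ - e i.castSucc) ≤ D * (tt i.succ - tt i.castSucc))
    (k : Fin (J + 1)) : pinorm2 pv (e k) ≤ pinorm2 pv (e 0) + D * (tt k - tt 0) := by
  induction k using Fin.induction with
  | zero => simp
  | succ i ih =>
    calc pinorm2 pv (e i.succ)
        = pinorm2 pv (e i.castSucc + (e i.succ - e i.castSucc)) := by rw [add_sub_cancel]
      _ ≤ pinorm2 pv (e i.castSucc) + pinorm2 pv (e i.succ - e i.castSucc) :=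
        pinorm2_add_le hpv _ _
      _ ≤ pinorm2 pv (e 0) + D * (tt i.succ - tt 0) := by linarith [h i]

end PiNorm

lemma Fin.exists_mem_Ico_castSucc_succ {α : Type*} [LinearOrder α] :
    ∀ {J : ℕ} (f : Fin (J + 1) → α) {t : α}, f 0 ≤ t → t < f (Fin.last J) →
      ∃ i : Fin J, t ∈ Ico (f i.castSucc) (f i.succ)
  | 0, _, _, h0, hlast => absurd h0 (not_le.2 hlast)
  | J + 1, f, t, h0, hlast => by
    rcases lt_or_ge t (f (Fin.last J).castSucc) with hlt | hge
    · obtain ⟨i, hi⟩ := Fin.exists_mem_Ico_castSucc_succ (fun k => f k.castSucc) h0 hlt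
      exact ⟨i.castSucc, hi⟩
    · exact ⟨Fin.last J, hge, hlast⟩

lemma le_ciSup_one_div_mul_mul {ι : Type*} [Finite ι] {a b : ι → ℝ} (hb : ∀ i, 0 < b i)
    (i : ι) : a i ≤ (⨆ j, 1 / b j * a j) * b i := by
  rw [← div_le_iff₀ (hb i), ← one_div_mul_eq_div]
  exact Finite.le_ciSup_of_le i le_rfl

lemma pinorm2_sub_le_of_piecewise_const {n J : ℕ} {pv : Fin n → ℝ} (hpv : ∀ i, 0 ≤ pv i)
    (hsum : ∑ i, pv i = 1) {z zs : ℝ → Fin n → ℝ} {tt : Fin (J + 1) → ℝ} (htt : Monotone tt)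
    {L D₃ D₄ : ℝ} (hL : 0 ≤ L) (hD₃ : 0 ≤ D₃) (hD₄ : 0 ≤ D₄)
    (hlip : ∀ i, ∀ s ∈ Ici (tt 0), ∀ u ∈ Ici (tt 0), |z u i - z s i| ≤ L * |u - s|)
    (hzs : ∀ i : Fin J, ∀ s ∈ Ico (tt i.castSucc) (tt i.succ), zs s = zs (tt i.castSucc))
    (h₃ : ∀ i : Fin J, pinorm2 pv (z (tt i.succ) - z (tt i.castSucc) -
      (zs (tt i.succ) - zs (tt i.castSucc))) ≤ D₃ * (tt i.succ - tt i.castSucc))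
    (h₄ : ∀ i : Fin J, tt i.succ - tt i.castSucc ≤ D₄)
    {t : ℝ} (ht : t ∈ Icc (tt 0) (tt (Fin.last J))) :
    pinorm2 pv (z t - zs t) ≤
      pinorm2 pv (z (tt 0) - zs (tt 0)) + D₃ * (tt (Fin.last J) - tt 0) + L * D₄ := by
  have hnode : ∀ k, pinorm2 pv (z (tt k) - zs (tt k)) ≤
      pinorm2 pv (z (tt 0) - zs (tt 0)) + D₃ * (tt (Fin.last J) - tt 0) := fun k =>
    (pinorm2_le_add_mul_of_increments_le hpv (fun k => z (tt k) - zs (tt k)) tt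
      (fun i => by simpa only [sub_sub_sub_comm] using h₃ i) k).trans
      (by gcongr; exact htt (Fin.le_last k))
  rcases ht.2.eq_or_lt with rfl | hlt
  · linarith [hnode (Fin.last J), mul_nonneg hL hD₄]
  obtain ⟨i, hi⟩ := Fin.exists_mem_Ico_castSucc_succ tt ht.1 hlt
  have hdrift : pinorm2 pv (z t - z (tt i.castSucc)) ≤ L * D₄ :=
    pinorm2_le_of_abs_le hpv hsum (mul_nonneg hL hD₄) fun j =>
      (hlip j _ (htt (Fin.zero_le _)) t ht.1).trans <| by
        rw [abs_of_nonneg (sub_nonneg.2 hi.1)]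
        gcongr
        linarith [h₄ i, hi.2]
  calc pinorm2 pv (z t - zs t)
      = pinorm2 pv ((z t - z (tt i.castSucc)) + (z (tt i.castSucc) - zs (tt i.castSucc))) := by
        rw [hzs i t hi, sub_add_sub_cancel]
    _ ≤ pinorm2 pv (z t - z (tt i.castSucc)) +
          pinorm2 pv (z (tt i.castSucc) - zs (tt i.castSucc)) := pinorm2_add_le hpv _ _
    _ ≤ _ := by linarith [hnode i.castSucc]

def sisField {n : ℕ} (W : Matrix (Fin n) (Fin n) ℝ) (pv γ x : Fin n → ℝ) (i : Fin n) : ℝ :=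
  (1 - x i) * (∑ j, W i j * pv j * x j) - γ i * x i

section SIS

variable {n : ℕ} {W : Matrix (Fin n) (Fin n) ℝ} {pv γ : Fin n → ℝ} {M : ℝ}

lemma sum_mul_mul_mem_Icc (hW : ∀ i j, W i j ∈ Icc 0 M) (hpv : ∀ i, 0 ≤ pv i)
    (hsum : ∑ i, pv i = 1) {x : Fin n → ℝ} (hx : ∀ i, x i ∈ Icc 0 1) (i : Fin n) :
    ∑ j, W i j * pv j * x j ∈ Icc 0 M := by
  refine ⟨Finset.sum_nonneg fun j _ => mul_nonneg (mul_nonneg (hW i j).1 (hpv j)) (hx j).1, ?_⟩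
  calc ∑ j, W i j * pv j * x j ≤ ∑ j, M * pv j := Finset.sum_le_sum fun j _ =>
        (mul_le_of_le_one_right (mul_nonneg (hW i j).1 (hpv j)) (hx j).2).trans
          (mul_le_mul_of_nonneg_right (hW i j).2 (hpv j))
    _ = M := by rw [← Finset.mul_sum, hsum, mul_one]

lemma abs_sisField_le (hW : ∀ i j, W i j ∈ Icc 0 M) (hγ : ∀ i, γ i ∈ Icc 0 M)
    (hpv : ∀ i, 0 ≤ pv i) (hsum : ∑ i, pv i = 1) {x : Fin n → ℝ} (hx : ∀ i, x i ∈ Icc 0 1)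
    (i : Fin n) : |sisField W pv γ x i| ≤ M := by
  obtain ⟨hS₀, hSM⟩ := sum_mul_mul_mem_Icc hW hpv hsum hx i
  have hinf : (1 - x i) * ∑ j, W i j * pv j * x j ∈ Icc 0 M :=
    ⟨mul_nonneg (by linarith [(hx i).2]) hS₀,
      (mul_le_of_le_one_left hS₀ (by linarith [(hx i).1])).trans hSM⟩
  have hcure : γ i * x i ∈ Icc 0 M :=
    ⟨mul_nonneg (hγ i).1 (hx i).1, (mul_le_of_le_one_right (hγ i).1 (hx i).2).trans (hγ i).2⟩
  rw [sisField]
  exact abs_le.2 ⟨by linarith [hinf.1, hcure.2], by linarith [hinf.2, hcure.1]⟩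

lemma abs_sub_le_of_hasDerivWithinAt_sisField (hW : ∀ i j, W i j ∈ Icc 0 M)
    (hγ : ∀ i, γ i ∈ Icc 0 M) (hpv : ∀ i, 0 ≤ pv i) (hsum : ∑ i, pv i = 1)
    {z : ℝ → Fin n → ℝ}
    (hderiv : ∀ i, ∀ t ∈ Ici (0 : ℝ),
      HasDerivWithinAt (fun s => z s i) (sisField W pv γ (z t) i) (Ici 0) t)
    (hz : ∀ t ∈ Ici (0 : ℝ), ∀ i, z t i ∈ Icc 0 1) (i : Fin n) {s u : ℝ} (hs : 0 ≤ s)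
    (hu : 0 ≤ u) : |z u i - z s i| ≤ M * |u - s| :=
  (convex_Ici 0).norm_image_sub_le_of_norm_hasDerivWithin_le (hderiv i)
    (fun t ht => abs_sisField_le hW hγ hpv hsum (hz t ht) i) hs hu

end SIS

theorem stmt_18_general (m M T₀ : ℝ) (hm : 0 < m) (hmM : m ≤ M) :
    ∃ C : ℝ, ∀ (n J : ℕ), 0 < J →
      ∀ (W : Matrix (Fin n) (Fin n) ℝ) (pv γ : Fin n → ℝ)
        (z zs : ℝ → Fin n → ℝ) (tt : Fin (J + 1) → ℝ),
      W.IsSymm → (∀ i j, W i j ∈ Set.Icc m M) →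
      (∀ i, z 0 i ∈ Set.Icc m (1 - m)) →
      (∀ i, γ i ∈ Set.Icc (0 : ℝ) M) →
      (∀ i, 0 ≤ pv i) → (∑ i, pv i = 1) →
      (∀ i, ∀ t ∈ Set.Ici (0 : ℝ), HasDerivWithinAt (fun s => z s i)
        ((1 - z t i) * (∑ j, W i j * pv j * z t j) - γ i * z t i) (Set.Ici 0) t) →
      (∀ t ∈ Set.Ici (0 : ℝ), ∀ i, z t i ∈ Set.Icc (0 : ℝ) 1) →
      StrictMono tt → tt 0 = 0 → tt (Fin.last J) = T₀ →
      (∀ i : Fin J, ∀ s ∈ Set.Ico (tt i.castSucc) (tt i.succ),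
        zs s = zs (tt i.castSucc)) →
      ∀ t ∈ Set.Icc (0 : ℝ) T₀,
        pinorm2 pv (fun j => z t j - zs t j) ≤
          C * (pinorm2 pv (fun j => z 0 j - zs 0 j) +
            (⨆ i : Fin J, (1 / (tt i.succ - tt i.castSucc)) *
              pinorm2 pv (fun j =>
                (z (tt i.succ) j - z (tt i.castSucc) j) -
                (zs (tt i.succ) j - zs (tt i.castSucc) j))) +
            (⨆ i : Fin J, (tt i.succ - tt i.castSucc))) := by
  refine ⟨1 + T₀ + M, fun n J _ W pv γ z zs tt _ hW _ hγ hpv hsum hderiv hz htt htt₀ httJ hzs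
    t ht => ?_⟩
  have hM : 0 ≤ M := hm.le.trans hmM
  have hT₀ : 0 ≤ T₀ := htt₀ ▸ httJ ▸ htt.monotone (Fin.zero_le _)
  have hW₀ : ∀ i j, W i j ∈ Icc 0 M := fun i j => Icc_subset_Icc hm.le le_rfl (hW i j)
  have hdt : ∀ i : Fin J, 0 < tt i.succ - tt i.castSucc := fun i =>
    sub_pos.2 (htt Fin.castSucc_lt_succ)
  set Δ₃ := ⨆ i : Fin J, (1 / (tt i.succ - tt i.castSucc)) *
    pinorm2 pv (fun j => (z (tt i.succ) j - z (tt i.castSucc) j) -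
      (zs (tt i.succ) j - zs (tt i.castSucc) j))
  set Δ₄ := ⨆ i : Fin J, (tt i.succ - tt i.castSucc)
  have hΔ₃ : 0 ≤ Δ₃ := Real.iSup_nonneg fun i =>
    mul_nonneg (one_div_nonneg.2 (hdt i).le) (pinorm2_nonneg _ _)
  have hΔ₄ : 0 ≤ Δ₄ := Real.iSup_nonneg fun i => (hdt i).le
  have hlip : ∀ i, ∀ s ∈ Ici (tt 0), ∀ u ∈ Ici (tt 0), |z u i - z s i| ≤ M * |u - s| := by
    rw [htt₀]
    exact fun i s hs u hu =>
      abs_sub_le_of_hasDerivWithinAt_sisField hW₀ hγ hpv hsum hderiv hz i hs hu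
  have key := pinorm2_sub_le_of_piecewise_const hpv hsum htt.monotone hM hΔ₃ hΔ₄ hlip hzs
    (le_ciSup_one_div_mul_mul hdt) (fun i => Finite.le_ciSup_of_le i le_rfl) (t := t)
    (by rwa [htt₀, httJ])
  rw [htt₀, httJ, sub_zero] at key
  refine key.trans ?_
  change _ ≤ (1 + T₀ + M) * (pinorm2 pv (z 0 - zs 0) + Δ₃ + Δ₄)
  nlinarith [pinorm2_nonneg pv (z 0 - zs 0)]

/-- Discrete measurements (Lemma `l:ztpi2s`): with measurement points
`0 = t₀ < t₁ < ⋯ < t_J = T₀`, piecewise-constant measured curve `z*`, and error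
terms `Δ₁, Δ₃, Δ₄`, there is a constant `C` depending only on `m, M, T₀` such that
`‖z(t) − z*(t)‖_{2,π} ≤ C (Δ₁ + Δ₃ + Δ₄)` for all `t ∈ [0,T₀]`. -/
theorem stmt_18 (m M T₀ : ℝ) (hm : 0 < m) (hm2 : m ≤ 1 / 2) (hmM : m ≤ M)
    (hT₀ : 0 < T₀) :
    ∃ C : ℝ, ∀ (n J : ℕ), 0 < J →
      ∀ (W : Matrix (Fin n) (Fin n) ℝ) (pv γ : Fin n → ℝ)
        (z zs : ℝ → Fin n → ℝ) (tt : Fin (J + 1) → ℝ),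
      W.IsSymm → (∀ i j, W i j ∈ Set.Icc m M) →
      (∀ i, z 0 i ∈ Set.Icc m (1 - m)) →
      (∀ i, γ i ∈ Set.Icc (0 : ℝ) M) →
      (∀ i, 0 ≤ pv i) → (∑ i, pv i = 1) →
      (∀ i, ∀ t ∈ Set.Ici (0 : ℝ), HasDerivWithinAt (fun s => z s i)
        ((1 - z t i) * (∑ j, W i j * pv j * z t j) - γ i * z t i) (Set.Ici 0) t) →
      (∀ t ∈ Set.Ici (0 : ℝ), ∀ i, z t i ∈ Set.Icc (0 : ℝ) 1) →
      StrictMono tt → tt 0 = 0 → tt (Fin.last J) = T₀ →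
      (∀ i : Fin J, ∀ s ∈ Set.Ico (tt i.castSucc) (tt i.succ),
        zs s = zs (tt i.castSucc)) →
      ∀ t ∈ Set.Icc (0 : ℝ) T₀,
        pinorm2 pv (fun j => z t j - zs t j) ≤
          C * (pinorm2 pv (fun j => z 0 j - zs 0 j) +
            (⨆ i : Fin J, (1 / (tt i.succ - tt i.castSucc)) *
              pinorm2 pv (fun j =>
                (z (tt i.succ) j - z (tt i.castSucc) j) -
                (zs (tt i.succ) j - zs (tt i.castSucc) j))) +
            (⨆ i : Fin J, (tt i.succ - tt i.castSucc))) :=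
  stmt_18_general m M T₀ hm hmM
end
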